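/- arXiv:1003.5026 — 11 statements merged into one kernel-verified Lean document; each statement's English description precedes it below -/
import Mathlib

section
/- Suppose 0 < F(x) ≤ c < ∞ for all x > 0, limsup_{x→∞} F(x) < 1, and liminf_{x→0⁺} F(x) > 1. Then every positive solution (A_n)_{n≥−m} of A_{n+1} = A_n·F(A_{n−m}) is persistent, i.e. 0 < liminf_{n→∞} A_n ≤ limsup_{n→∞} A_n < ∞. -/
open Filter

/-- Persistence: under boundedness of `F`, `limsup_{x→∞} F(x) < 1` and
`liminf_{x→0⁺} F(x) > 1`, every positive solution of `A_{n+1} = A_n F(A_{n-m})`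
is persistent: `0 < liminf A_n ≤ limsup A_n < ∞`. -/
theorem stmt_0 (m : ℕ) (F : ℝ → ℝ) (c : ℝ)
    (hFc : ∀ x : ℝ, 0 < x → 0 < F x ∧ F x ≤ c)
    (hcont : ContinuousOn F (Set.Ioi (0 : ℝ)))
    (hsup : Filter.limsup F Filter.atTop < 1)
    (hinf : 1 < Filter.liminf F (nhdsWithin 0 (Set.Ioi (0 : ℝ))))
    (A : ℤ → ℝ)
    (hApos : ∀ n : ℤ, -(m : ℤ) ≤ n → 0 < A n)
    (hArec : ∀ n : ℤ, 0 ≤ n → A (n + 1) = A n * F (A (n - m))) :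
    0 < Filter.liminf (fun n => (A n : EReal)) Filter.atTop ∧
      Filter.limsup (fun n => (A n : EReal)) Filter.atTop < ⊤ := by
  have hneg : -(m:ℤ) ≤ 0 := by omega
  have hApos' : ∀ n : ℤ, 0 ≤ n → 0 < A n := fun n hn => hApos n (hneg.trans hn)
  set S : Finset ℤ := Finset.Icc (-(m:ℤ)) 0 with hSdef
  have hS0 : (0:ℤ) ∈ S := Finset.mem_Icc.mpr ⟨hneg, le_rfl⟩
  have hSne : S.Nonempty := ⟨0, hS0⟩
  set Imax : ℝ := S.sup' hSne A with hImaxdef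
  set Imin : ℝ := S.inf' hSne A with hImindef
  have hImax0 : 0 < Imax := lt_of_lt_of_le (hApos' 0 le_rfl) (Finset.le_sup' A hS0)
  have hImin0 : 0 < Imin := by
    obtain ⟨j, hj, hje⟩ := Finset.exists_mem_eq_inf' hSne A
    rw [hImindef, hje]
    exact hApos j (Finset.mem_Icc.mp hj).1
  -- constants from limsup at infinity
  have hbddF : Filter.IsBoundedUnder (· ≤ ·) Filter.atTop F := by
    refine Filter.isBoundedUnder_of_eventually_le (a := c) ?_
    filter_upwards [eventually_gt_atTop (0:ℝ)] with x hx
    exact (hFc x hx).2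
  obtain ⟨q, hq1, hq2⟩ := exists_between hsup
  have hevq : ∀ᶠ x in atTop, F x < q := Filter.eventually_lt_of_limsup_lt hq1 hbddF
  obtain ⟨M0, hM0⟩ := Filter.eventually_atTop.mp hevq
  set M : ℝ := max M0 1 with hMdef
  have hM1 : (1:ℝ) ≤ M := le_max_right _ _
  have hMq : ∀ x : ℝ, M ≤ x → F x < q := fun x hx =>
    hM0 x (le_trans (le_max_left _ _) hx)
  -- constants from liminf at 0+
  have hcobdd : Filter.IsBoundedUnder (· ≥ ·) (nhdsWithin 0 (Set.Ioi (0:ℝ))) F := by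
    refine Filter.isBoundedUnder_of_eventually_ge (a := 0) ?_
    filter_upwards [self_mem_nhdsWithin] with x hx
    exact (hFc x hx).1.le
  obtain ⟨p, hp1, hp2⟩ := exists_between hinf
  have hevp : ∀ᶠ x in nhdsWithin 0 (Set.Ioi (0:ℝ)), p < F x :=
    Filter.eventually_lt_of_lt_liminf hp2 hcobdd
  rw [Filter.eventually_iff, mem_nhdsGT_iff_exists_Ioo_subset] at hevp
  obtain ⟨δ, hδmem, hδ⟩ := hevp
  have hδpos : (0:ℝ) < δ := hδmem
  -- upper bound B
  set c' : ℝ := max c 1 with hc'def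
  have hc'1 : (1:ℝ) ≤ c' := le_max_right _ _
  have hc'0 : (0:ℝ) ≤ c' := zero_le_one.trans hc'1
  have hFc' : ∀ x : ℝ, 0 < x → F x ≤ c' := fun x hx =>
    le_trans (hFc x hx).2 (le_max_left _ _)
  set B : ℝ := max M Imax * c' ^ (m+1) with hBdef
  have hmax0 : (0:ℝ) ≤ max M Imax := le_trans (zero_le_one.trans hM1) (le_max_left _ _)
  have hpow1 : (1:ℝ) ≤ c' ^ (m+1) := one_le_pow₀ hc'1
  have hMB : M ≤ B := le_trans (le_max_left M Imax) (le_mul_of_one_le_right hmax0 hpow1)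
  have hImaxB : Imax ≤ B := le_trans (le_max_right M Imax) (le_mul_of_one_le_right hmax0 hpow1)
  have hB0 : (0:ℝ) < B := lt_of_lt_of_le (lt_of_lt_of_le one_pos hM1) hMB
  -- chain of c' bounds
  have chainU : ∀ j : ℕ, ∀ n : ℤ, 0 ≤ n → (j:ℤ) ≤ n + 1 → A (n+1) ≤ A (n+1-j) * c' ^ j := by
    intro j
    induction j with
    | zero => intro n _ _; simp
    | succ j ih =>
      intro n hn hj
      have hj' : (j:ℤ) ≤ n := by push_cast at hj; omega
      have h1 := ih n hn (by omega)
      have hidx : (0:ℤ) ≤ n - j := by omega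
      have hrec := hArec (n - j) hidx
      have heq : n - (j:ℤ) + 1 = n + 1 - j := by ring
      rw [heq] at hrec
      have hposArg : 0 < A (n - j - m) := hApos _ (by omega)
      have h2 : A (n+1-(j:ℤ)) ≤ A (n - j) * c' := by
        rw [hrec]
        exact mul_le_mul_of_nonneg_left (hFc' _ hposArg) (hApos' _ hidx).le
      have hidx2 : n + 1 - ((j+1 : ℕ) : ℤ) = n - j := by push_cast; ring
      rw [hidx2, pow_succ]
      calc A (n+1) ≤ A (n+1-(j:ℤ)) * c'^j := h1
        _ ≤ (A (n-(j:ℤ)) * c') * c'^j :=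
            mul_le_mul_of_nonneg_right h2 (pow_nonneg hc'0 j)
        _ = A (n-(j:ℤ)) * (c'^j * c') := by ring
  -- global upper bound
  have hub : ∀ k : ℕ, A (k:ℤ) ≤ B := by
    intro k
    induction k using Nat.strong_induction_on with
    | _ k ih =>
      match k with
      | 0 => exact le_trans (Finset.le_sup' A hS0) hImaxB
      | Nat.succ n =>
        have hn0 : (0:ℤ) ≤ (n:ℤ) := Int.ofNat_nonneg n
        have hcast : ((n+1 : ℕ) : ℤ) = (n:ℤ) + 1 := by push_cast; ring
        rw [hcast]
        by_cases hnm : n < m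
        · have hc := chainU (n+1) n hn0 (by push_cast; omega)
          have hidx : (n:ℤ) + 1 - ((n+1:ℕ):ℤ) = 0 := by push_cast; ring
          rw [hidx] at hc
          have hA0 : A 0 ≤ Imax := Finset.le_sup' A hS0
          have hpowle : c'^(n+1) ≤ c'^(m+1) := pow_le_pow_right₀ hc'1 (by omega)
          calc A ((n:ℤ)+1) ≤ A 0 * c'^(n+1) := hc
            _ ≤ Imax * c'^(m+1) :=
                mul_le_mul hA0 hpowle (pow_nonneg hc'0 _) hImax0.le
            _ ≤ max M Imax * c'^(m+1) :=
                mul_le_mul_of_nonneg_right (le_max_right _ _) (pow_nonneg hc'0 _)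
        · by_cases hcase : A ((n:ℤ) - m) < M
          · have hc := chainU (m+1) n hn0 (by push_cast; omega)
            have hidx : (n:ℤ) + 1 - ((m+1:ℕ):ℤ) = (n:ℤ) - m := by push_cast; ring
            rw [hidx] at hc
            calc A ((n:ℤ)+1) ≤ A ((n:ℤ)-m) * c'^(m+1) := hc
              _ ≤ M * c'^(m+1) :=
                  mul_le_mul_of_nonneg_right hcase.le (pow_nonneg hc'0 _)
              _ ≤ max M Imax * c'^(m+1) :=
                  mul_le_mul_of_nonneg_right (le_max_left _ _) (pow_nonneg hc'0 _)
          · push_neg at hcase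
            have hqlt := hMq _ hcase
            have hrec := hArec n hn0
            have hAn : A (n:ℤ) ≤ B := ih n (Nat.lt_succ_self n)
            calc A ((n:ℤ)+1) = A (n:ℤ) * F (A ((n:ℤ)-m)) := hrec
              _ ≤ A (n:ℤ) * 1 :=
                  mul_le_mul_of_nonneg_left (le_of_lt (hqlt.trans hq2)) (hApos' n hn0).le
              _ = A (n:ℤ) := mul_one _
              _ ≤ B := hAn
  have hubZ : ∀ n : ℤ, -(m:ℤ) ≤ n → A n ≤ B := by
    intro n hn
    rcases le_or_gt 0 n with h0 | h0
    · have h := hub n.toNat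
      rwa [Int.toNat_of_nonneg h0] at h
    · have hmem : n ∈ S := Finset.mem_Icc.mpr ⟨hn, h0.le⟩
      exact le_trans (Finset.le_sup' A hmem) hImaxB
  -- lower bound machinery
  set δ' : ℝ := min (δ/2) B with hδ'def
  have hδ'0 : 0 < δ' := lt_min (by linarith) hB0
  have hδ'B : δ' ≤ B := min_le_right _ _
  have hδ'δ : δ' < δ := lt_of_le_of_lt (min_le_left _ _) (by linarith)
  have hKsub : Set.Icc δ' B ⊆ Set.Ioi (0:ℝ) := fun x hx => lt_of_lt_of_le hδ'0 hx.1
  obtain ⟨x0, hx0K, hx0min⟩ :=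
    (isCompact_Icc (a := δ') (b := B)).exists_isMinOn (Set.nonempty_Icc.mpr hδ'B)
      (hcont.mono hKsub)
  set r : ℝ := min p (F x0) with hrdef
  have hr0 : 0 < r := lt_min (by linarith) (hFc x0 (hKsub hx0K)).1
  have hFr : ∀ x : ℝ, 0 < x → x ≤ B → r ≤ F x := by
    intro x hx hxB
    rcases lt_or_ge x δ' with h | h
    · have hmem : x ∈ Set.Ioo (0:ℝ) δ := ⟨hx, lt_trans h hδ'δ⟩
      exact le_trans (min_le_left _ _) (le_of_lt (hδ hmem))
    · exact le_trans (min_le_right _ _) (isMinOn_iff.mp hx0min x ⟨h, hxB⟩)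
  set r' : ℝ := min r 1 with hr'def
  have hr'0 : 0 < r' := lt_min hr0 one_pos
  have hr'1 : r' ≤ 1 := min_le_right _ _
  have hFr' : ∀ x : ℝ, 0 < x → x ≤ B → r' ≤ F x := fun x hx hxB =>
    le_trans (min_le_left _ _) (hFr x hx hxB)
  set b : ℝ := min δ' Imin * r' ^ (m+1) with hbdef
  have hminpos : 0 < min δ' Imin := lt_min hδ'0 hImin0
  have hb0 : 0 < b := mul_pos hminpos (pow_pos hr'0 _)
  -- chain of r' lower bounds
  have chainL : ∀ j : ℕ, ∀ n : ℤ, 0 ≤ n → (j:ℤ) ≤ n + 1 → A (n+1-j) * r' ^ j ≤ A (n+1) := by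
    intro j
    induction j with
    | zero => intro n _ _; simp
    | succ j ih =>
      intro n hn hj
      have hj' : (j:ℤ) ≤ n := by push_cast at hj; omega
      have h1 := ih n hn (by omega)
      have hidx : (0:ℤ) ≤ n - j := by omega
      have hrec := hArec (n - j) hidx
      have heq : n - (j:ℤ) + 1 = n + 1 - j := by ring
      rw [heq] at hrec
      have hposArg : 0 < A (n - j - m) := hApos _ (by omega)
      have hargB : A (n - (j:ℤ) - m) ≤ B := hubZ _ (by omega)
      have h2 : A (n - (j:ℤ)) * r' ≤ A (n+1-(j:ℤ)) := by
        rw [hrec]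
        exact mul_le_mul_of_nonneg_left (hFr' _ hposArg hargB) (hApos' _ hidx).le
      have hidx2 : n + 1 - ((j+1 : ℕ) : ℤ) = n - j := by push_cast; ring
      rw [hidx2, pow_succ]
      calc A (n - (j:ℤ)) * (r'^j * r') = (A (n-(j:ℤ)) * r') * r'^j := by ring
        _ ≤ A (n+1-(j:ℤ)) * r'^j :=
            mul_le_mul_of_nonneg_right h2 (pow_nonneg hr'0.le j)
        _ ≤ A (n+1) := h1
  -- global lower bound
  have hlb : ∀ k : ℕ, b ≤ A (k:ℤ) := by
    intro k
    induction k using Nat.strong_induction_on with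
    | _ k ih =>
      match k with
      | 0 =>
        have hbi : b ≤ Imin :=
          le_trans (mul_le_of_le_one_right hminpos.le (pow_le_one₀ hr'0.le hr'1))
            (min_le_right _ _)
        exact le_trans hbi (Finset.inf'_le A hS0)
      | Nat.succ n =>
        have hn0 : (0:ℤ) ≤ (n:ℤ) := Int.ofNat_nonneg n
        have hcast : ((n+1 : ℕ) : ℤ) = (n:ℤ) + 1 := by push_cast; ring
        rw [hcast]
        by_cases hnm : n < m
        · have hc := chainL (n+1) n hn0 (by push_cast; omega)
          have hidx : (n:ℤ) + 1 - ((n+1:ℕ):ℤ) = 0 := by push_cast; ring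
          rw [hidx] at hc
          have hA0 : Imin ≤ A 0 := Finset.inf'_le A hS0
          have hpowle : r'^(m+1) ≤ r'^(n+1) := pow_le_pow_of_le_one hr'0.le hr'1 (by omega)
          calc b ≤ Imin * r'^(m+1) :=
              mul_le_mul_of_nonneg_right (min_le_right _ _) (pow_nonneg hr'0.le _)
            _ ≤ A 0 * r'^(n+1) :=
              mul_le_mul hA0 hpowle (pow_nonneg hr'0.le _) (hApos' 0 le_rfl).le
            _ ≤ A ((n:ℤ)+1) := hc
        · by_cases hcase : A ((n:ℤ) - m) < δ'
          · have hmem : A ((n:ℤ)-m) ∈ Set.Ioo (0:ℝ) δ :=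
              ⟨hApos _ (by omega), lt_trans hcase hδ'δ⟩
            have hpF : p < F (A ((n:ℤ)-m)) := hδ hmem
            have hrec := hArec n hn0
            have hAn : b ≤ A (n:ℤ) := ih n (Nat.lt_succ_self n)
            calc b ≤ A (n:ℤ) := hAn
              _ = A (n:ℤ) * 1 := (mul_one _).symm
              _ ≤ A (n:ℤ) * F (A ((n:ℤ)-m)) :=
                  mul_le_mul_of_nonneg_left (le_of_lt (hp1.trans hpF)) (hApos' n hn0).le
              _ = A ((n:ℤ)+1) := hrec.symm
          · push_neg at hcase
            have hc := chainL (m+1) n hn0 (by push_cast; omega)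
            have hidx : (n:ℤ) + 1 - ((m+1:ℕ):ℤ) = (n:ℤ) - m := by push_cast; ring
            rw [hidx] at hc
            calc b ≤ δ' * r'^(m+1) :=
                mul_le_mul_of_nonneg_right (min_le_left _ _) (pow_nonneg hr'0.le _)
              _ ≤ A ((n:ℤ)-m) * r'^(m+1) :=
                mul_le_mul_of_nonneg_right hcase (pow_nonneg hr'0.le _)
              _ ≤ A ((n:ℤ)+1) := hc
  -- conclude
  have hevb : ∀ᶠ n : ℤ in atTop, (b : EReal) ≤ (A n : EReal) := by
    filter_upwards [eventually_ge_atTop (0:ℤ)] with n hn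
    have h := hlb n.toNat
    rw [Int.toNat_of_nonneg hn] at h
    exact_mod_cast h
  have hevB : ∀ᶠ n : ℤ in atTop, (A n : EReal) ≤ (B : EReal) := by
    filter_upwards [eventually_ge_atTop (0:ℤ)] with n hn
    exact_mod_cast hubZ n (hneg.trans hn)
  constructor
  · calc (0:EReal) < (b:EReal) := by exact_mod_cast hb0
      _ ≤ _ := Filter.le_liminf_of_le (by isBoundedDefault) hevb
  · calc Filter.limsup (fun n => (A n : EReal)) Filter.atTop ≤ (B:EReal) :=
        Filter.limsup_le_of_le (by isBoundedDefault) hevB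
      _ < ⊤ := EReal.coe_lt_top B
end

section
/- Suppose 0 < F(x) ≤ c < ∞ for all x > 0 and limsup_{x→∞} F(x) < 1. Then every positive solution (A_n)_{n≥−m} of A_{n+1} = A_n·F(A_{n−m}) is bounded from above, i.e. limsup_{n→∞} A_n < ∞. -/
/-!
Since `limsup F < 1`, there is `M` with `F x < 1` for `x ≥ M`, and `F ≤ c` gives
`A (n + 1) ≤ c ^ (m + 1) * A (n - m)`. So for `n ≥ m`, either `A (n - m) < M` and then
`A (n + 1) ≤ c ^ (m + 1) * M`, or `F (A (n - m)) < 1` and then `A (n + 1) ≤ A n`.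
Hence `A (n + 1) ≤ max (c ^ (m + 1) * M) (A n)`, and the sequence stays below
`max (c ^ (m + 1) * M) (A m)` from index `m` on.
-/

open Filter

theorem le_pow_mul_of_forall_succ_le_mul {u : ℤ → ℝ} {C : ℝ} (hC : 0 ≤ C) {a : ℤ} {k : ℕ}
    (h : ∀ j : ℕ, j < k → u (a + j + 1) ≤ C * u (a + j)) : u (a + k) ≤ C ^ k * u a := by
  induction k with
  | zero => simp
  | succ k ih =>
    calc u (a + (k + 1 : ℕ)) = u (a + k + 1) := by push_cast; ring_nf
      _ ≤ C * u (a + k) := h k k.lt_succ_self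
      _ ≤ C * (C ^ k * u a) :=
        mul_le_mul_of_nonneg_left (ih fun j hj => h j (hj.trans k.lt_succ_self)) hC
      _ = C ^ (k + 1) * u a := by ring

theorem le_max_of_forall_succ_le_max {α : Type*} [LinearOrder α] {u : ℤ → α} {B : α} {N : ℤ}
    (h : ∀ n, N ≤ n → u (n + 1) ≤ max B (u n)) : ∀ n, N ≤ n → u n ≤ max B (u N) := by
  intro n hn
  induction n, hn using Int.leInduction with
  | base => exact le_max_right _ _
  | succ n hn ih => exact (h n hn).trans (max_le (le_max_left _ _) ih)

theorem limsup_coe_lt_top_of_eventually_le {ι : Type*} {l : Filter ι} {u : ι → ℝ} {K : ℝ}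
    (h : ∀ᶠ n in l, u n ≤ K) : limsup (fun n => (u n : EReal)) l < ⊤ :=
  (limsup_le_of_le (by isBoundedDefault) (h.mono fun _ hn => EReal.coe_le_coe_iff.mpr hn)).trans_lt
    (EReal.coe_lt_top K)

section DelayEquation

variable {m : ℕ} {F : ℝ → ℝ} {c : ℝ} {A : ℤ → ℝ}

theorem solution_le_pow_mul_delayed (hc : 0 ≤ c) (hFc : ∀ x : ℝ, 0 < x → F x ≤ c)
    (hApos : ∀ n : ℤ, -(m : ℤ) ≤ n → 0 < A n)
    (hArec : ∀ n : ℤ, 0 ≤ n → A (n + 1) = A n * F (A (n - m))) {n : ℤ} (hn : (m : ℤ) ≤ n) :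
    A (n + 1) ≤ c ^ (m + 1) * A (n - m) := by
  have h := le_pow_mul_of_forall_succ_le_mul hc (u := A) (a := n - m) (k := m + 1) fun j hj => by
    have hj' : (j : ℤ) ≤ m := by omega
    rw [hArec _ (by omega), mul_comm c]
    exact mul_le_mul_of_nonneg_left (hFc _ (hApos _ (by omega))) (hApos _ (by omega)).le
  convert h using 2
  push_cast
  ring

theorem solution_succ_le_max (hc : 0 ≤ c) (hFc : ∀ x : ℝ, 0 < x → F x ≤ c) {M : ℝ}
    (hM : ∀ x, M ≤ x → F x < 1) (hApos : ∀ n : ℤ, -(m : ℤ) ≤ n → 0 < A n)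
    (hArec : ∀ n : ℤ, 0 ≤ n → A (n + 1) = A n * F (A (n - m))) {n : ℤ} (hn : (m : ℤ) ≤ n) :
    A (n + 1) ≤ max (c ^ (m + 1) * M) (A n) := by
  by_cases hA : M ≤ A (n - m)
  · refine le_max_of_le_right ?_
    rw [hArec n (by omega)]
    exact mul_le_of_le_one_right (hApos n (by omega)).le (hM _ hA).le
  · refine le_max_of_le_left ?_
    calc A (n + 1) ≤ c ^ (m + 1) * A (n - m) := solution_le_pow_mul_delayed hc hFc hApos hArec hn
      _ ≤ c ^ (m + 1) * M := mul_le_mul_of_nonneg_left (not_le.mp hA).le (pow_nonneg hc _)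

end DelayEquation

theorem stmt_1_general (m : ℕ) (F : ℝ → ℝ) (c : ℝ)
    (hFc : ∀ x : ℝ, 0 < x → 0 < F x ∧ F x ≤ c)
    (hsup : Filter.limsup F Filter.atTop < 1)
    (A : ℤ → ℝ)
    (hApos : ∀ n : ℤ, -(m : ℤ) ≤ n → 0 < A n)
    (hArec : ∀ n : ℤ, 0 ≤ n → A (n + 1) = A n * F (A (n - m))) :
    Filter.limsup (fun n => (A n : EReal)) Filter.atTop < ⊤ := by
  have hFle : ∀ x : ℝ, 0 < x → F x ≤ c := fun x hx => (hFc x hx).2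
  have hc : 0 ≤ c := ((hFc 1 one_pos).1.trans_le (hFle 1 one_pos)).le
  have hF_bdd : IsBoundedUnder (· ≤ ·) atTop F :=
    isBoundedUnder_of_eventually_le ((eventually_gt_atTop 0).mono hFle)
  obtain ⟨M, hM⟩ := eventually_atTop.mp (eventually_lt_of_limsup_lt hsup hF_bdd)
  have hbound := le_max_of_forall_succ_le_max fun n hn =>
    solution_succ_le_max hc hFle hM hApos hArec hn
  exact limsup_coe_lt_top_of_eventually_le ((eventually_ge_atTop (m : ℤ)).mono hbound)

/-- Boundedness from above: under boundedness of `F` and `limsup_{x→∞} F(x) < 1`,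
every positive solution of `A_{n+1} = A_n F(A_{n-m})` satisfies
`limsup_{n→∞} A_n < ∞`. -/
theorem stmt_1 (m : ℕ) (F : ℝ → ℝ) (c : ℝ)
    (hFc : ∀ x : ℝ, 0 < x → 0 < F x ∧ F x ≤ c)
    (hcont : ContinuousOn F (Set.Ioi (0 : ℝ)))
    (hsup : Filter.limsup F Filter.atTop < 1)
    (A : ℤ → ℝ)
    (hApos : ∀ n : ℤ, -(m : ℤ) ≤ n → 0 < A n)
    (hArec : ∀ n : ℤ, 0 ≤ n → A (n + 1) = A n * F (A (n - m))) :
    Filter.limsup (fun n => (A n : EReal)) Filter.atTop < ⊤ :=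
  stmt_1_general m F c hFc hsup A hApos hArec
end

section
/- Suppose 0 < F(x) ≤ c < ∞ for all x > 0, limsup_{x→∞} F(x) < 1, and liminf_{x→0⁺} F(x) > 1. Then every positive solution (A_n)_{n≥−m} of A_{n+1} = A_n·F(A_{n−m}) satisfies liminf_{n→∞} A_n > 0. -/
open Filter

/-- Boundedness away from zero: under boundedness of `F`, `limsup_{x→∞} F(x) < 1`
and `liminf_{x→0⁺} F(x) > 1`, every positive solution of `A_{n+1} = A_n F(A_{n-m})`
satisfies `liminf_{n→∞} A_n > 0`. -/
theorem stmt_2 (m : ℕ) (F : ℝ → ℝ) (c : ℝ)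
    (hFc : ∀ x : ℝ, 0 < x → 0 < F x ∧ F x ≤ c)
    (hcont : ContinuousOn F (Set.Ioi (0 : ℝ)))
    (hsup : Filter.limsup F Filter.atTop < 1)
    (hinf : 1 < Filter.liminf F (nhdsWithin 0 (Set.Ioi (0 : ℝ))))
    (A : ℤ → ℝ)
    (hApos : ∀ n : ℤ, -(m : ℤ) ≤ n → 0 < A n)
    (hArec : ∀ n : ℤ, 0 ≤ n → A (n + 1) = A n * F (A (n - m))) :
    0 < Filter.liminf (fun n => (A n : EReal)) Filter.atTop := by
  set c' : ℝ := max c 1 with hc'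
  have hc'1 : (1:ℝ) ≤ c' := le_max_right _ _
  have hc'0 : (0:ℝ) < c' := lt_of_lt_of_le one_pos hc'1
  have hFle : ∀ x : ℝ, 0 < x → F x ≤ c' := fun x hx =>
    le_trans (hFc x hx).2 (le_max_left _ _)
  -- δ from liminf at 0⁺
  have hbd₁ : Filter.IsBoundedUnder (· ≥ ·) (nhdsWithin 0 (Set.Ioi (0:ℝ))) F := by
    refine ⟨0, Filter.eventually_map.2 ?_⟩
    filter_upwards [self_mem_nhdsWithin] with x hx
    exact (hFc x hx).1.le
  have hev₁ : ∀ᶠ x in nhdsWithin 0 (Set.Ioi (0:ℝ)), 1 < F x :=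
    Filter.eventually_lt_of_lt_liminf hinf hbd₁
  obtain ⟨δ, hδ0, hδ⟩ : ∃ δ > (0:ℝ), ∀ x, 0 < x → x < δ → 1 < F x := by
    rw [Filter.eventually_iff, mem_nhdsGT_iff_exists_Ioo_subset] at hev₁
    obtain ⟨u, hu, hsub⟩ := hev₁
    exact ⟨u, hu, fun x hx hxu => hsub ⟨hx, hxu⟩⟩
  -- M from limsup at ∞
  have hbd₂ : Filter.IsBoundedUnder (· ≤ ·) Filter.atTop F := by
    refine ⟨c, Filter.eventually_map.2 ?_⟩
    filter_upwards [Filter.eventually_gt_atTop (0:ℝ)] with x hx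
    exact (hFc x hx).2
  have hev₂ : ∀ᶠ x in Filter.atTop, F x < 1 :=
    Filter.eventually_lt_of_limsup_lt hsup hbd₂
  obtain ⟨M, hM⟩ := Filter.eventually_atTop.1 hev₂
  -- upward growth estimate
  have hup : ∀ n : ℤ, 0 ≤ n → ∀ k : ℕ, A (n + k) ≤ A n * c' ^ k := by
    intro n hn k
    induction k with
    | zero => simp
    | succ k ih =>
      have h1 : (0:ℤ) ≤ n + k := by omega
      have hrec := hArec (n + k) h1
      have hxpos : 0 < A (n + (k:ℤ) - m) := hApos _ (by omega)
      have hApk : 0 < A (n + (k:ℤ)) := hApos _ (by omega)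
      have hAn : 0 < A n := hApos _ (by omega)
      have heq : n + ((k+1:ℕ):ℤ) = (n + (k:ℤ)) + 1 := by push_cast; ring
      rw [heq, hrec]
      calc A (n + (k:ℤ)) * F (A (n + (k:ℤ) - m))
          ≤ (A n * c' ^ k) * c' :=
            mul_le_mul ih (hFle _ hxpos) (hFc _ hxpos).1.le (by positivity)
        _ = A n * c' ^ (k+1) := by ring
  -- upper bound for n ≥ m
  set U : ℝ := max (A (m:ℤ)) (M * c' ^ (m+1)) with hU
  have hBub : ∀ n : ℤ, (m:ℤ) ≤ n → A n ≤ U := by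
    refine Int.le_induction (le_max_left _ _) ?_
    intro n hn ih
    rcases lt_or_ge (A (n - m)) M with hlt | hge
    · have h := hup (n - m) (by omega) (m+1)
      have heq : (n - (m:ℤ)) + ((m+1:ℕ):ℤ) = n + 1 := by push_cast; ring
      rw [heq] at h
      refine le_trans h (le_trans ?_ (le_max_right _ _))
      exact mul_le_mul_of_nonneg_right hlt.le (by positivity)
    · have hpos : 0 < A (n - m) := hApos _ (by omega)
      have hF1 : F (A (n - m)) < 1 := hM _ hge
      have hrec := hArec n (by omega)
      have hAn : 0 < A n := hApos _ (by omega)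
      rw [hrec]
      calc A n * F (A (n - m)) ≤ A n * 1 :=
          mul_le_mul_of_nonneg_left hF1.le hAn.le
        _ = A n := mul_one _
        _ ≤ U := ih
  have hU0 : 0 < U := lt_of_lt_of_le (hApos (m:ℤ) (by omega)) (le_max_left _ _)
  -- minimum of F on the compact window
  set δ₀ : ℝ := min δ U with hδ₀
  have hδ₀0 : 0 < δ₀ := lt_min hδ0 hU0
  have hδ₀U : δ₀ ≤ U := min_le_right _ _
  have hsubset : Set.Icc δ₀ U ⊆ Set.Ioi (0:ℝ) := fun x hx =>
    lt_of_lt_of_le hδ₀0 hx.1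
  obtain ⟨x₀, hx₀mem, hx₀min⟩ :=
    isCompact_Icc.exists_isMinOn ⟨δ₀, le_refl _, hδ₀U⟩ (hcont.mono hsubset)
  have hFx₀ : 0 < F x₀ := (hFc _ (hsubset hx₀mem)).1
  set ρ : ℝ := min (F x₀) 1 with hρdef
  have hρ0 : 0 < ρ := lt_min hFx₀ one_pos
  have hρ : ∀ x : ℝ, 0 < x → x ≤ U → ρ ≤ F x := by
    intro x hx hxU
    rcases lt_or_ge x δ₀ with hlt | hge
    · have : 1 < F x := hδ x hx (lt_of_lt_of_le hlt (min_le_left _ _))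
      exact le_trans (min_le_right _ _) this.le
    · exact le_trans (min_le_left _ _) (hx₀min ⟨hge, hxU⟩)
  -- downward growth estimate
  have hdown : ∀ n : ℤ, 2*(m:ℤ) ≤ n → ∀ k : ℕ, A n * ρ ^ k ≤ A (n + k) := by
    intro n hn k
    induction k with
    | zero => simp
    | succ k ih =>
      have hrec := hArec (n + k) (by omega)
      have hxpos : 0 < A (n + (k:ℤ) - m) := hApos _ (by omega)
      have hxle : A (n + (k:ℤ) - m) ≤ U := hBub _ (by omega)
      have hFρ : ρ ≤ F (A (n + (k:ℤ) - m)) := hρ _ hxpos hxle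
      have heq : n + ((k+1:ℕ):ℤ) = (n + (k:ℤ)) + 1 := by push_cast; ring
      rw [heq, hrec]
      calc A n * ρ ^ (k+1) = (A n * ρ ^ k) * ρ := by ring
        _ ≤ A (n + (k:ℤ)) * F (A (n + (k:ℤ) - m)) :=
            mul_le_mul ih hFρ hρ0.le (hApos _ (by omega)).le
  -- eventual lower bound
  set L : ℝ := min (A (3*(m:ℤ))) (δ₀ * ρ ^ (m+1)) with hL
  have hL0 : 0 < L := lt_min (hApos _ (by omega)) (by positivity)
  have hlow : ∀ n : ℤ, 3*(m:ℤ) ≤ n → L ≤ A n := by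
    refine Int.le_induction (min_le_left _ _) ?_
    intro n hn ih
    rcases lt_or_ge (A (n - m)) δ₀ with hlt | hge
    · have hpos : 0 < A (n - m) := hApos _ (by omega)
      have h1 : 1 < F (A (n - m)) :=
        hδ _ hpos (lt_of_lt_of_le hlt (min_le_left _ _))
      have hrec := hArec n (by omega)
      have hAn : 0 < A n := hApos n (by omega)
      rw [hrec]
      exact le_trans ih (le_mul_of_one_le_right hAn.le h1.le)
    · have h := hdown (n - m) (by omega) (m+1)
      have heq : (n - (m:ℤ)) + ((m+1:ℕ):ℤ) = n + 1 := by push_cast; ring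
      rw [heq] at h
      have hst : δ₀ * ρ ^ (m+1) ≤ A (n+1) :=
        le_trans (mul_le_mul_of_nonneg_right hge (by positivity)) h
      exact le_trans (min_le_right _ _) hst
  -- conclude for the liminf in EReal
  have hev : ∀ᶠ n : ℤ in Filter.atTop, (L : EReal) ≤ (A n : EReal) := by
    filter_upwards [Filter.eventually_ge_atTop (3*(m:ℤ))] with n hn
    exact_mod_cast hlow n hn
  have hle : (L : EReal) ≤ Filter.liminf (fun n => (A n : EReal)) Filter.atTop :=
    Filter.le_liminf_of_le (by isBoundedDefault) hev
  exact lt_of_lt_of_le (by exact_mod_cast hL0) hle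
end

section
/- Let (A_n)_{n≥−m} be a persistent positive solution of A_{n+1} = A_n·F(A_{n−m}). Then there exist two-sided sequences (P_n)_{n∈ℤ} and (Q_n)_{n∈ℤ} of positive reals satisfying P_{n+1} = P_n·F(P_{n−m}) and Q_{n+1} = Q_n·F(Q_{n−m}) for all n ∈ ℤ, such that P_0 = limsup_{n→∞} A_n, Q_0 = liminf_{n→∞} A_n, and Q_0 ≤ P_n ≤ P_0 and Q_0 ≤ Q_n ≤ P_0 for all n ∈ ℤ. -/
/-!
Persistence puts the solution eventually in a compact interval `[c, C] ⊂ (0, ∞)`. Choose an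
ultrafilter `U` finer than `atTop` along which `A` tends to its limsup (resp. liminf). Along `U`
every shift `n ↦ A (n + j)` converges, by compactness, to some `P j`, and continuity of `F` turns
the recurrence for `A` into the recurrence for `P` on all of `ℤ`. Each `P j` is a cluster point
of `A`, hence lies between its liminf and its limsup.
-/

open Filter Topology Set

section ShiftLimits

variable {X : Type*} [TopologicalSpace X] {U : Filter ℤ}

theorem eventually_add_const_of_le_atTop (hU : U ≤ atTop) {p : ℤ → Prop}
    (hp : ∀ᶠ n in atTop, p n) (j : ℤ) : ∀ᶠ n in U, p (n + j) :=
  hU ((tendsto_atTop_add_const_right atTop j tendsto_id).eventually hp)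

theorem MapClusterPt.of_tendsto_shift [NeBot U] (hU : U ≤ atTop) {A : ℤ → X} {x : X} {j : ℤ}
    (h : Tendsto (fun n => A (n + j)) U (𝓝 x)) : MapClusterPt x atTop A :=
  MapClusterPt.of_comp (tendsto_atTop_add_const_right atTop j tendsto_id)
    (h.mapClusterPt.mono hU)

theorem Ultrafilter.exists_tendsto_shift {U : Ultrafilter ℤ} (hU : (U : Filter ℤ) ≤ atTop)
    {A : ℤ → X} {K : Set X} (hK : IsCompact K) (hAK : ∀ᶠ n in atTop, A n ∈ K) (j : ℤ) :
    ∃ x ∈ K, Tendsto (fun n => A (n + j)) (U : Filter ℤ) (𝓝 x) :=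
  hK.ultrafilter_le_nhds' (U.map fun n => A (n + j))
    (eventually_add_const_of_le_atTop hU hAK j)

end ShiftLimits

theorem exists_eventually_mem_Icc_of_persistent {ι : Type*} {f : Filter ι} {u : ι → ℝ}
    (hlo : 0 < liminf (fun n => (u n : EReal)) f)
    (hhi : limsup (fun n => (u n : EReal)) f < ⊤) :
    ∃ c C : ℝ, 0 < c ∧ ∀ᶠ n in f, u n ∈ Icc c C := by
  obtain ⟨C, hCgt, -⟩ := EReal.lt_iff_exists_real_btwn.1 hhi
  obtain ⟨c, hc0, hclt⟩ := EReal.lt_iff_exists_real_btwn.1 hlo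
  refine ⟨c, C, EReal.coe_pos.1 hc0, ?_⟩
  filter_upwards [eventually_lt_of_lt_liminf hclt, eventually_lt_of_limsup_lt hCgt]
    with n hcn hnC
  exact ⟨(EReal.coe_lt_coe_iff.1 hcn).le, (EReal.coe_lt_coe_iff.1 hnC).le⟩

section DelayRecurrence

variable {m : ℕ} {F : ℝ → ℝ} {A : ℤ → ℝ}

theorem delayRecurrence_of_tendsto_shift (hcont : ContinuousOn F (Ioi 0))
    (hArec : ∀ᶠ n in atTop, A (n + 1) = A n * F (A (n - m)))
    {U : Filter ℤ} [NeBot U] (hU : U ≤ atTop) {P : ℤ → ℝ} (hPpos : ∀ j, 0 < P j)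
    (hP : ∀ j, Tendsto (fun n => A (n + j)) U (𝓝 (P j))) (j : ℤ) :
    P (j + 1) = P j * F (P (j - m)) := by
  have hFP : ContinuousAt F (P (j - m)) := hcont.continuousAt (Ioi_mem_nhds (hPpos _))
  have hlim : Tendsto (fun n => A (n + j) * F (A (n + (j - m)))) U
      (𝓝 (P j * F (P (j - m)))) :=
    (hP j).mul (hFP.tendsto.comp (hP (j - m)))
  refine tendsto_nhds_unique ((tendsto_congr' ?_).1 (hP (j + 1))) hlim
  filter_upwards [eventually_add_const_of_le_atTop hU hArec j] with n hn
  rw [← add_assoc, hn, add_sub_assoc]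

theorem exists_delayRecurrence_of_mapClusterPt (hcont : ContinuousOn F (Ioi 0))
    (hArec : ∀ᶠ n in atTop, A (n + 1) = A n * F (A (n - m)))
    {c C : ℝ} (hc : 0 < c) (hAbdd : ∀ᶠ n in atTop, A n ∈ Icc c C)
    {L : ℝ} (hL : MapClusterPt L atTop A) :
    ∃ P : ℤ → ℝ, (∀ n, 0 < P n) ∧ (∀ n, P (n + 1) = P n * F (P (n - m))) ∧ P 0 = L ∧
      ∀ n, MapClusterPt (P n) atTop A := by
  obtain ⟨U, hU, hAL⟩ := mapClusterPt_iff_ultrafilter.1 hL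
  choose P hPK hP using U.exists_tendsto_shift hU isCompact_Icc hAbdd
  have hPpos : ∀ n, 0 < P n := fun n => hc.trans_le (hPK n).1
  refine ⟨P, hPpos, delayRecurrence_of_tendsto_shift hcont hArec hU hPpos hP, ?_,
    fun n => .of_tendsto_shift hU (hP n)⟩
  exact tendsto_nhds_unique (by simpa using hP 0) hAL

end DelayRecurrence

theorem stmt_3_general (m : ℕ) (F : ℝ → ℝ)
    (hcont : ContinuousOn F (Set.Ioi (0 : ℝ)))
    (A : ℤ → ℝ)
    (hArec : ∀ n : ℤ, 0 ≤ n → A (n + 1) = A n * F (A (n - m)))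
    (hpers : 0 < Filter.liminf (fun n => (A n : EReal)) Filter.atTop ∧
      Filter.limsup (fun n => (A n : EReal)) Filter.atTop < ⊤) :
    ∃ P Q : ℤ → ℝ,
      (∀ n : ℤ, 0 < P n) ∧ (∀ n : ℤ, 0 < Q n) ∧
      (∀ n : ℤ, P (n + 1) = P n * F (P (n - m))) ∧
      (∀ n : ℤ, Q (n + 1) = Q n * F (Q (n - m))) ∧
      P 0 = Filter.limsup A Filter.atTop ∧
      Q 0 = Filter.liminf A Filter.atTop ∧
      (∀ n : ℤ, Q 0 ≤ P n ∧ P n ≤ P 0) ∧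
      (∀ n : ℤ, Q 0 ≤ Q n ∧ Q n ≤ P 0) := by
  obtain ⟨c, C, hc, hAbdd⟩ := exists_eventually_mem_Icc_of_persistent hpers.1 hpers.2
  have hArec' : ∀ᶠ n in atTop, A (n + 1) = A n * F (A (n - m)) :=
    eventually_ge_atTop 0 |>.mono hArec
  have hAle : IsBoundedUnder (· ≤ ·) atTop A :=
    ⟨C, eventually_map.2 (hAbdd.mono fun _ h => h.2)⟩
  have hAge : IsBoundedUnder (· ≥ ·) atTop A :=
    ⟨c, eventually_map.2 (hAbdd.mono fun _ h => h.1)⟩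
  obtain ⟨P, hPpos, hPrec, hP0, hPclust⟩ := exists_delayRecurrence_of_mapClusterPt hcont hArec'
    hc hAbdd (MapClusterPt.limsup hAge.isCoboundedUnder_le hAle)
  obtain ⟨Q, hQpos, hQrec, hQ0, hQclust⟩ := exists_delayRecurrence_of_mapClusterPt hcont hArec'
    hc hAbdd (MapClusterPt.liminf hAle.isCoboundedUnder_ge hAge)
  have hbounds : ∀ R : ℤ → ℝ, (∀ n, MapClusterPt (R n) atTop A) →
      ∀ n, Q 0 ≤ R n ∧ R n ≤ P 0 :=
    fun R hR n => ⟨hQ0 ▸ (hR n).liminf_le hAge, hP0 ▸ (hR n).le_limsup hAle⟩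
  exact ⟨P, Q, hPpos, hQpos, hPrec, hQrec, hP0, hQ0, hbounds P hPclust, hbounds Q hQclust⟩

/-- Full limiting sequences: if `(A_n)` is a persistent positive solution of
`A_{n+1} = A_n F(A_{n-m})`, then there exist two-sided positive sequences `P`, `Q`
satisfying the recurrence for all integers `n`, with `P 0 = limsup A`,
`Q 0 = liminf A`, and `Q 0 ≤ P n ≤ P 0`, `Q 0 ≤ Q n ≤ P 0` for all `n`. -/
theorem stmt_3 (m : ℕ) (F : ℝ → ℝ)
    (hFpos : ∀ x : ℝ, 0 < x → 0 < F x)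
    (hcont : ContinuousOn F (Set.Ioi (0 : ℝ)))
    (A : ℤ → ℝ)
    (hApos : ∀ n : ℤ, -(m : ℤ) ≤ n → 0 < A n)
    (hArec : ∀ n : ℤ, 0 ≤ n → A (n + 1) = A n * F (A (n - m)))
    (hpers : 0 < Filter.liminf (fun n => (A n : EReal)) Filter.atTop ∧
      Filter.limsup (fun n => (A n : EReal)) Filter.atTop < ⊤) :
    ∃ P Q : ℤ → ℝ,
      (∀ n : ℤ, 0 < P n) ∧ (∀ n : ℤ, 0 < Q n) ∧
      (∀ n : ℤ, P (n + 1) = P n * F (P (n - m))) ∧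
      (∀ n : ℤ, Q (n + 1) = Q n * F (Q (n - m))) ∧
      P 0 = Filter.limsup A Filter.atTop ∧
      Q 0 = Filter.liminf A Filter.atTop ∧
      (∀ n : ℤ, Q 0 ≤ P n ∧ P n ≤ P 0) ∧
      (∀ n : ℤ, Q 0 ≤ Q n ∧ Q n ≤ P 0) :=
  stmt_3_general m F hcont A hArec hpers
end

section
/- Assume: 0 < F(x) ≤ c for all x > 0, limsup_{x→∞} F(x) < 1, liminf_{x→0⁺} F(x) > 1; there is a unique x̄ > 0 with F(x̄) = 1; α := inf_{x>0} F(x) and c := sup_{x>0} F(x) satisfy 0 < α < 1 < c < ∞; and F(x) ≤ 1 if and only if x ≥ x̄ (equivalently F(x) ≥ 1 if and only if x ≤ x̄). Then every positive solution (A_n)_{n≥−m} of A_{n+1} = A_n·F(A_{n−m}) satisfies x̄·α^{m+1} < liminf_{n→∞} A_n ≤ x̄ ≤ limsup_{n→∞} A_n < x̄·c^{m+1}. -/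
/-!
At a step where `A` increases, `F (A (n - m)) > 1`, so `A (n - m) < x̄`; unfolding `m + 1` steps of
the recurrence then bounds `A (n + 1)` by `K c^m` with `K = sup_{0 < x ≤ x̄} x F x`, and continuity
of `F` at `x̄` gives `K < x̄ c`. A solution that eventually stays above some `D > x̄` is eventually
nonincreasing, hence trapped in a compact interval to the right of `x̄` on which `F ≤ ν < 1`, and
so decays geometrically, which is absurd. This yields `limsup A < x̄ c^{m+1}` and `liminf A ≤ x̄`.
The lower bounds follow by applying the same argument to `1 / A`, a solution of the equation with
nonlinearity `y ↦ 1 / F (1 / y)`, equilibrium `1 / x̄` and bounds `1 / c ≤ · ≤ 1 / α`.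
-/

open Filter Set

theorem not_eventually_le_and_le_mul {u : ℤ → ℝ} {s ν : ℝ} (hs : 0 < s) (hν : ν < 1) :
    ¬∀ᶠ n in atTop, s ≤ u n ∧ u (n + 1) ≤ ν * u n := by
  intro h
  obtain ⟨N, hN⟩ := eventually_atTop.1 h
  have huN : 0 < u N := hs.trans_le (hN N le_rfl).1
  have hν0 : 0 ≤ ν := by
    by_contra! hν0
    have := hN N le_rfl
    have := (hN (N + 1) (by omega)).1
    nlinarith
  have hpow : ∀ k : ℕ, u (N + k) ≤ ν ^ k * u N := by
    intro k
    induction k with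
    | zero => simp
    | succ k ih =>
      calc u (N + (k + 1 : ℕ)) = u (N + k + 1) := by push_cast; ring_nf
        _ ≤ ν * u (N + k) := (hN (N + k) (by omega)).2
        _ ≤ ν * (ν ^ k * u N) := mul_le_mul_of_nonneg_left ih hν0
        _ = ν ^ (k + 1) * u N := by ring
  obtain ⟨k, hk⟩ := exists_pow_lt_of_lt_one (div_pos hs huN) hν
  have := (hN (N + k) (by omega)).1.trans (hpow k)
  rw [lt_div_iff₀ huN] at hk
  linarith

theorem EReal.liminf_coe_le_of_frequently_lt {ι : Type*} {l : Filter ι} {u : ι → ℝ} {x : ℝ}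
    (h : ∀ s, x < s → ∃ᶠ i in l, u i < s) : liminf (fun i => (u i : EReal)) l ≤ x :=
  EReal.le_of_forall_lt_iff_le.1 fun s hs =>
    liminf_le_of_frequently_le' <| (h s (EReal.coe_lt_coe_iff.1 hs)).mono fun _ hi =>
      EReal.coe_le_coe_iff.2 hi.le

theorem EReal.le_limsup_coe_of_frequently_gt {ι : Type*} {l : Filter ι} {u : ι → ℝ} {x : ℝ}
    (h : ∀ s, s < x → ∃ᶠ i in l, s < u i) : (x : EReal) ≤ limsup (fun i => (u i : EReal)) l :=
  EReal.ge_of_forall_gt_iff_ge.1 fun s hs =>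
    le_limsup_of_frequently_le' <| (h s (EReal.coe_lt_coe_iff.1 hs)).mono fun _ hi =>
      EReal.coe_le_coe_iff.2 hi.le

structure IsNegativeFeedback (F : ℝ → ℝ) (xbar : ℝ) : Prop where
  pos : 0 < xbar
  continuousOn : ContinuousOn F (Ioi 0)
  apply_pos : ∀ x, 0 < x → 0 < F x
  apply_self : F xbar = 1
  one_lt_of_lt : ∀ x, 0 < x → x < xbar → 1 < F x
  lt_one_of_lt : ∀ x, xbar < x → F x < 1

structure IsPosSolution (m : ℕ) (F : ℝ → ℝ) (A : ℤ → ℝ) : Prop where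
  pos : ∀ n : ℤ, -(m : ℤ) ≤ n → 0 < A n
  succ_eq : ∀ n : ℤ, 0 ≤ n → A (n + 1) = A n * F (A (n - m))

namespace IsNegativeFeedback

variable {F : ℝ → ℝ} {xbar c : ℝ}

theorem lt_of_one_lt (hF : IsNegativeFeedback F xbar) {x : ℝ} (hx : 0 < x) (h : 1 < F x) :
    x < xbar := by
  by_contra! hle
  rcases hle.eq_or_lt with rfl | hlt
  · exact h.ne' hF.apply_self
  · exact (hF.lt_one_of_lt x hlt).not_gt h

theorem inv (hF : IsNegativeFeedback F xbar) : IsNegativeFeedback (fun y => (F y⁻¹)⁻¹) xbar⁻¹ where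
  pos := inv_pos.2 hF.pos
  continuousOn := by
    refine (hF.continuousOn.comp (continuousOn_inv₀.mono fun y hy => ne_of_gt hy)
      fun y hy => mem_Ioi.2 (inv_pos.2 hy)).inv₀ fun y hy => (hF.apply_pos _ (inv_pos.2 hy)).ne'
  apply_pos y hy := inv_pos.2 (hF.apply_pos _ (inv_pos.2 hy))
  apply_self := by simp [hF.apply_self]
  one_lt_of_lt y hy hlt := by
    have hF1 := hF.lt_one_of_lt _ ((lt_inv_comm₀ hy hF.pos).1 hlt)
    exact (one_lt_inv₀ (hF.apply_pos _ (inv_pos.2 hy))).2 hF1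
  lt_one_of_lt y hlt := by
    have hy : 0 < y := (inv_pos.2 hF.pos).trans hlt
    exact inv_lt_one_of_one_lt₀ (hF.one_lt_of_lt _ (inv_pos.2 hy) ((inv_lt_comm₀ hF.pos hy).1 hlt))

theorem exists_mul_apply_le (hF : IsNegativeFeedback F xbar) (hFc : ∀ x, 0 < x → F x ≤ c)
    (hc : 1 < c) : ∃ K, xbar < K ∧ K < xbar * c ∧ ∀ x ∈ Ioc 0 xbar, x * F x ≤ K := by
  obtain ⟨c', h1c', hc'c⟩ := exists_between hc
  have hnear : {x | F x < c'} ∈ nhds xbar :=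
    (hF.continuousOn.continuousAt (Ioi_mem_nhds hF.pos)).preimage_mem_nhds
      (Iio_mem_nhds (hF.apply_self ▸ h1c'))
  obtain ⟨t, ⟨ht0, htx⟩, hts⟩ := exists_Ioc_subset_of_mem_nhds' hnear hF.pos
  refine ⟨max (t * c) (xbar * c'), lt_max_of_lt_right (lt_mul_of_one_lt_right hF.pos h1c'),
    max_lt (by gcongr) (by gcongr; exact hF.pos), fun x ⟨hx0, hxx⟩ => ?_⟩
  rcases le_or_gt x t with hxt | htx'
  · exact le_max_of_le_left <|
      mul_le_mul hxt (hFc x hx0) (hF.apply_pos x hx0).le (by linarith)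
  · refine le_max_of_le_right ?_
    calc x * F x ≤ x * c' := by gcongr; exact (hts ⟨htx', hxx⟩).le
      _ ≤ xbar * c' := by gcongr

end IsNegativeFeedback

namespace IsPosSolution

variable {m : ℕ} {F : ℝ → ℝ} {A : ℤ → ℝ} {xbar c α : ℝ}

theorem inv (hA : IsPosSolution m F A) :
    IsPosSolution m (fun y => (F y⁻¹)⁻¹) (fun n => (A n)⁻¹) where
  pos n hn := inv_pos.2 (hA.pos n hn)
  succ_eq n hn := by simp [hA.succ_eq n hn, mul_comm]

theorem eq_mul_prod (hA : IsPosSolution m F A) {n : ℤ} (hn : 0 ≤ n) (k : ℕ) :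
    A (n + k) = A n * ∏ j ∈ Finset.range k, F (A (n + j - m)) := by
  induction k with
  | zero => simp
  | succ k ih =>
    rw [Finset.prod_range_succ, ← mul_assoc, ← ih, ← hA.succ_eq _ (by omega)]
    push_cast
    ring_nf

theorem not_eventually_mem_Icc (hA : IsPosSolution m F A) (hF : IsNegativeFeedback F xbar)
    {s S : ℝ} (hs : xbar < s) : ¬∀ᶠ n in atTop, A n ∈ Icc s S := by
  intro h
  obtain ⟨n, hn⟩ := h.exists
  have hs0 : 0 < s := hF.pos.trans hs
  obtain ⟨x, hx, hmax⟩ := isCompact_Icc.exists_isMaxOn (nonempty_Icc.2 (hn.1.trans hn.2))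
    (hF.continuousOn.mono fun y hy => hs0.trans_le hy.1)
  refine not_eventually_le_and_le_mul (u := A) hs0 (hF.lt_one_of_lt x (hs.trans_le hx.1)) ?_
  have hdelay : ∀ᶠ n in atTop, A (n - m) ∈ Icc s S :=
    (tendsto_atTop_add_const_right atTop (-(m : ℤ)) tendsto_id).eventually h
  filter_upwards [h, hdelay, eventually_ge_atTop 0] with n hn hnm hn0
  refine ⟨hn.1, ?_⟩
  rw [hA.succ_eq n hn0, mul_comm]
  exact mul_le_mul_of_nonneg_right (hmax hnm) (hA.pos n (by omega)).le

theorem eventually_le_of_succ_le (hA : IsPosSolution m F A) (hF : IsNegativeFeedback F xbar)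
    {D : ℝ} {M : ℤ} (hD : xbar < D) (h : ∀ n, M ≤ n → A n < A (n + 1) → A (n + 1) ≤ D) :
    ∀ᶠ n in atTop, A n ≤ D := by
  by_cases hle : ∃ N, M ≤ N ∧ A N ≤ D
  · obtain ⟨N, hMN, hN⟩ := hle
    refine eventually_atTop.2 ⟨N, fun n hn => ?_⟩
    induction n, hn using Int.leInduction with
    | base => exact hN
    | succ n hNn ih =>
      rcases le_or_gt (A (n + 1)) (A n) with hdec | hinc
      · exact hdec.trans ih
      · exact h n (hMN.trans hNn) hinc
  · push Not at hle
    have hanti : ∀ n, M ≤ n → A n ≤ A M := fun n hn => by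
      induction n, hn using Int.leInduction with
      | base => exact le_rfl
      | succ n hMn ih =>
        exact (not_lt.1 fun hinc => (hle _ (by omega)).not_ge (h n hMn hinc)).trans ih
    exact (hA.not_eventually_mem_Icc hF hD
      (eventually_atTop.2 ⟨M, fun n hn => ⟨(hle n hn).le, hanti n hn⟩⟩)).elim

theorem succ_le_of_lt_succ (hA : IsPosSolution m F A) (hF : IsNegativeFeedback F xbar)
    (hFc : ∀ x, 0 < x → F x ≤ c) {K : ℝ} (hK : ∀ x ∈ Ioc 0 xbar, x * F x ≤ K) {n : ℤ}
    (hn : (m : ℤ) ≤ n) (hinc : A n < A (n + 1)) : A (n + 1) ≤ K * c ^ m := by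
  have hpos : ∀ k, n - m - m ≤ k → 0 < A k := fun k hk => hA.pos k (by omega)
  have hdelay : A (n - m) < xbar := by
    refine hF.lt_of_one_lt (hpos _ (by omega)) ?_
    have := hA.succ_eq n (by omega)
    have := hpos n (by omega)
    nlinarith
  have hunfold := hA.eq_mul_prod (n := n - m) (by omega) (m + 1)
  rw [Finset.prod_range_succ, show n - m + ((m + 1 : ℕ) : ℤ) = n + 1 by push_cast; ring,
    show n - m + (m : ℤ) - m = n - m by ring] at hunfold
  rw [hunfold, mul_comm (∏ j ∈ _, _), ← mul_assoc]
  refine mul_le_mul (hK _ ⟨hpos _ (by omega), hdelay.le⟩) ?_ ?_ ?_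
  · exact (Finset.prod_le_prod (fun j _ => (hF.apply_pos _ (hpos _ (by omega))).le)
      fun j _ => hFc _ (hpos _ (by omega))).trans_eq (by simp)
  · exact Finset.prod_nonneg fun j _ => (hF.apply_pos _ (hpos _ (by omega))).le
  · exact (mul_pos (hpos _ (by omega)) (hF.apply_pos _ (hpos _ (by omega)))).le.trans
      (hK _ ⟨hpos _ (by omega), hdelay.le⟩)


theorem exists_lt_eventually_le (hA : IsPosSolution m F A) (hF : IsNegativeFeedback F xbar)
    (hFc : ∀ x, 0 < x → F x ≤ c) (hc : 1 < c) :
    ∃ D < xbar * c ^ (m + 1), ∀ᶠ n in atTop, A n ≤ D := by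
  obtain ⟨K, hxK, hKc, hK⟩ := hF.exists_mul_apply_le hFc hc
  have hcm : 1 ≤ c ^ m := one_le_pow₀ hc.le
  refine ⟨K * c ^ m, ?_, hA.eventually_le_of_succ_le hF (M := m) ?_
    fun n hn hinc => hA.succ_le_of_lt_succ hF hFc hK hn hinc⟩
  · calc K * c ^ m < xbar * c * c ^ m := by gcongr
      _ = xbar * c ^ (m + 1) := by ring
  · exact hxK.trans_le (le_mul_of_one_le_right (hF.pos.trans hxK).le hcm)

theorem exists_gt_eventually_ge (hA : IsPosSolution m F A) (hF : IsNegativeFeedback F xbar)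
    (hFα : ∀ x, 0 < x → α ≤ F x) (hα0 : 0 < α) (hα1 : α < 1) :
    ∃ d > xbar * α ^ (m + 1), ∀ᶠ n in atTop, d ≤ A n := by
  obtain ⟨D, hD, hev⟩ := hA.inv.exists_lt_eventually_le hF.inv
    (fun y hy => inv_anti₀ hα0 (hFα _ (inv_pos.2 hy))) ((one_lt_inv₀ hα0).2 hα1)
  have hD0 : 0 < D := by
    obtain ⟨n, hn⟩ := (hev.and (eventually_ge_atTop 0)).exists
    exact (inv_pos.2 (hA.pos n (by omega))).trans_le hn.1
  refine ⟨D⁻¹, ?_, ?_⟩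
  · rw [inv_pow, ← mul_inv] at hD
    exact (lt_inv_comm₀ hD0 (mul_pos hF.pos (pow_pos hα0 _))).1 hD
  · filter_upwards [hev, eventually_ge_atTop 0] with n hn hn0
    exact (inv_le_comm₀ (hA.pos n (by omega)) hD0).1 hn

theorem frequently_lt (hA : IsPosSolution m F A) (hF : IsNegativeFeedback F xbar)
    (hFc : ∀ x, 0 < x → F x ≤ c) (hc : 1 < c) {s : ℝ} (hs : xbar < s) :
    ∃ᶠ n in atTop, A n < s := by
  obtain ⟨D, -, hD⟩ := hA.exists_lt_eventually_le hF hFc hc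
  exact fun hge => hA.not_eventually_mem_Icc hF hs
    ((hge.and hD).mono fun n hn => ⟨not_lt.1 hn.1, hn.2⟩)

theorem frequently_gt (hA : IsPosSolution m F A) (hF : IsNegativeFeedback F xbar)
    (hFα : ∀ x, 0 < x → α ≤ F x) (hα0 : 0 < α) (hα1 : α < 1) {s : ℝ} (hs : s < xbar) :
    ∃ᶠ n in atTop, s < A n := by
  have hApos : ∀ᶠ n in atTop, 0 < A n :=
    eventually_atTop.2 ⟨0, fun n hn => hA.pos n (by omega)⟩
  rcases le_or_gt s 0 with hs0 | hs0
  · exact (hApos.mono fun n hn => hs0.trans_lt hn).frequently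
  · have := hA.inv.frequently_lt hF.inv (c := α⁻¹)
      (fun y hy => inv_anti₀ hα0 (hFα _ (inv_pos.2 hy))) ((one_lt_inv₀ hα0).2 hα1)
      ((inv_lt_inv₀ hF.pos hs0).2 hs)
    exact (this.and_eventually hApos).mono fun n hn => (inv_lt_inv₀ hn.2 hs0).1 hn.1

end IsPosSolution

theorem stmt_4_general (m : ℕ) (F : ℝ → ℝ) (c α xbar : ℝ)
    (hFc : ∀ x : ℝ, 0 < x → 0 < F x ∧ F x ≤ c)
    (hcont : ContinuousOn F (Set.Ioi (0 : ℝ)))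
    (hxbar : 0 < xbar ∧ F xbar = 1 ∧ ∀ y : ℝ, 0 < y → F y = 1 → y = xbar)
    (hα : α = sInf (F '' Set.Ioi 0))
    (hbounds : 0 < α ∧ α < 1 ∧ 1 < c)
    (hmono : ∀ x : ℝ, 0 < x → (F x ≤ 1 ↔ xbar ≤ x))
    (A : ℤ → ℝ)
    (hApos : ∀ n : ℤ, -(m : ℤ) ≤ n → 0 < A n)
    (hArec : ∀ n : ℤ, 0 ≤ n → A (n + 1) = A n * F (A (n - m))) :
    ((xbar * α ^ (m + 1) : ℝ) : EReal) <
        Filter.liminf (fun n => (A n : EReal)) Filter.atTop ∧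
      Filter.liminf (fun n => (A n : EReal)) Filter.atTop ≤ (xbar : EReal) ∧
      (xbar : EReal) ≤ Filter.limsup (fun n => (A n : EReal)) Filter.atTop ∧
      Filter.limsup (fun n => (A n : EReal)) Filter.atTop <
        ((xbar * c ^ (m + 1) : ℝ) : EReal) := by
  obtain ⟨hx0, hFx, huniq⟩ := hxbar
  obtain ⟨hα0, hα1, hc⟩ := hbounds
  have hF : IsNegativeFeedback F xbar :=
    { pos := hx0
      continuousOn := hcont
      apply_pos := fun x hx => (hFc x hx).1
      apply_self := hFx
      one_lt_of_lt := fun x hx hlt => not_le.1 fun hle => hlt.not_ge ((hmono x hx).1 hle)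
      lt_one_of_lt := fun x hlt => by
        have hx : 0 < x := hx0.trans hlt
        exact ((hmono x hx).2 hlt.le).lt_of_ne fun h => hlt.ne' (huniq x hx h) }
  have hA : IsPosSolution m F A := ⟨hApos, hArec⟩
  have hFle : ∀ x, 0 < x → F x ≤ c := fun x hx => (hFc x hx).2
  have hFα : ∀ x, 0 < x → α ≤ F x := fun x hx =>
    hα ▸ csInf_le ⟨0, by rintro _ ⟨y, hy, rfl⟩; exact (hFc y hy).1.le⟩ ⟨x, hx, rfl⟩
  obtain ⟨d, hd, hdA⟩ := hA.exists_gt_eventually_ge hF hFα hα0 hα1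
  obtain ⟨D, hD, hAD⟩ := hA.exists_lt_eventually_le hF hFle hc
  refine ⟨?_, EReal.liminf_coe_le_of_frequently_lt fun s hs => hA.frequently_lt hF hFle hc hs,
    EReal.le_limsup_coe_of_frequently_gt fun s hs => hA.frequently_gt hF hFα hα0 hα1 hs, ?_⟩
  · refine (EReal.coe_lt_coe_iff.2 hd).trans_le (le_liminf_of_le (by isBoundedDefault) ?_)
    exact hdA.mono fun n hn => EReal.coe_le_coe_iff.2 hn
  · refine (limsup_le_of_le (by isBoundedDefault) ?_).trans_lt (EReal.coe_lt_coe_iff.2 hD)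
    exact hAD.mono fun n hn => EReal.coe_le_coe_iff.2 hn

/-- Uniform persistence: under the standing hypotheses and with a unique positive
equilibrium `x̄`, every positive solution of `A_{n+1} = A_n F(A_{n-m})` satisfies
`x̄ α^{m+1} < liminf A_n ≤ x̄ ≤ limsup A_n < x̄ c^{m+1}`. -/
theorem stmt_4 (m : ℕ) (F : ℝ → ℝ) (c α xbar : ℝ)
    (hFc : ∀ x : ℝ, 0 < x → 0 < F x ∧ F x ≤ c)
    (hcont : ContinuousOn F (Set.Ioi (0 : ℝ)))
    (hsup : Filter.limsup F Filter.atTop < 1)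
    (hinf : 1 < Filter.liminf F (nhdsWithin 0 (Set.Ioi (0 : ℝ))))
    (hxbar : 0 < xbar ∧ F xbar = 1 ∧ ∀ y : ℝ, 0 < y → F y = 1 → y = xbar)
    (hα : α = sInf (F '' Set.Ioi 0))
    (hc : c = sSup (F '' Set.Ioi 0))
    (hbounds : 0 < α ∧ α < 1 ∧ 1 < c)
    (hmono : ∀ x : ℝ, 0 < x → (F x ≤ 1 ↔ xbar ≤ x))
    (A : ℤ → ℝ)
    (hApos : ∀ n : ℤ, -(m : ℤ) ≤ n → 0 < A n)
    (hArec : ∀ n : ℤ, 0 ≤ n → A (n + 1) = A n * F (A (n - m))) :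
    ((xbar * α ^ (m + 1) : ℝ) : EReal) <
        Filter.liminf (fun n => (A n : EReal)) Filter.atTop ∧
      Filter.liminf (fun n => (A n : EReal)) Filter.atTop ≤ (xbar : EReal) ∧
      (xbar : EReal) ≤ Filter.limsup (fun n => (A n : EReal)) Filter.atTop ∧
      Filter.limsup (fun n => (A n : EReal)) Filter.atTop <
        ((xbar * c ^ (m + 1) : ℝ) : EReal) :=
  stmt_4_general m F c α xbar hFc hcont hxbar hα hbounds hmono A hApos hArec
end

section
/- Assume: 0 < F(x) ≤ c for all x > 0, limsup_{x→∞} F(x) < 1, liminf_{x→0⁺} F(x) > 1; there is a unique x̄ > 0 with F(x̄) = 1; 0 < α := inf_{x>0} F(x) < 1 < c := sup_{x>0} F(x) < ∞; F(x) ≤ 1 if and only if x ≥ x̄; there is L > 0 with |ln F(x)| ≤ L·|ln(x/x̄)| for all x ∈ (0, x̄·c^{m+1}); and (m + 3/2)·L < 3/2. Then every positive solution (A_n)_{n≥−m} of A_{n+1} = A_n·F(A_{n−m}) converges to x̄ as n → ∞. -/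
/-!
In the variables `x k = log (A (k - m) / x̄)` the equation reads
`x (n + m + 1) = x (n + m) + f (x n)` with `f u = log F (x̄ eᵘ)`: `f` has the sign opposite to `u`,
`f ≤ log c`, `|f u| ≤ L |u|` for `u < (m + 1) log c`, and `0` is its only zero, so any limit of `x`
is `0`. Monotone-convergence arguments then trap `x` eventually in a bounded interval on which the
Lipschitz bound holds, and make it return below any `ε > 0` (and above `-ε`) infinitely often.

Suppose `x ≥ -W` eventually. If `t` is the last time with `x t ≤ ε` before `x` climbs high, the
climb is fed only by `f (x (t - j))`, `j ≤ m`, since later feedback is `≤ 0`. One step raises `x` by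
at most `L W`, so `x (t - j) ≥ -(j + 1) L W` and the feedback from time `t - j` is at most
`L W min 1 ((j + 1) L)`: the total rise is at most `Φ W` with `Φ = L ∑_{k ≤ m} min 1 ((k + 1) L)`.
Hence `limsup x ≤ Φ (-liminf x)` and, symmetrically, `-liminf x ≤ Φ limsup x`. The condition
`(m + 3/2) L < 3/2` gives `Φ < 1`, which forces `limsup x = liminf x = 0`.
-/

open Filter Finset Topology

def overshootFactor (m : ℕ) (L : ℝ) : ℝ :=
  L * ∑ k ∈ range (m + 1), min 1 (((k : ℝ) + 1) * L)

-- A piecewise majorant whose increments over steps of length `L` dominate the summands of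
-- `overshootFactor`; in its linear regime, `overshootPotential L ((m + 1) L) < 1` is exactly
-- `(m + 3/2) L < 3/2`.
noncomputable def overshootPotential (L t : ℝ) : ℝ :=
  if t ≤ 1 then t * (t + L) / 2 else t - (1 - L) / 2

section Overshoot

variable {m : ℕ} {L : ℝ}

lemma overshootFactor_nonneg (hL : 0 ≤ L) : 0 ≤ overshootFactor m L :=
  mul_nonneg hL <| sum_nonneg fun _ _ => le_min zero_le_one (by positivity)

lemma mul_min_le_overshootPotential_sub (hL : 0 ≤ L) (t : ℝ) :
    L * min 1 (t + L) ≤ overshootPotential L (t + L) - overshootPotential L t := by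
  unfold overshootPotential
  split_ifs with h₁ h₂ h₂
  · rw [min_eq_right h₁]; nlinarith
  · linarith
  · rw [min_eq_left (by linarith)]; nlinarith
  · rw [min_eq_left (by linarith)]; linarith

lemma overshootFactor_le_overshootPotential (hL : 0 ≤ L) :
    overshootFactor m L ≤ overshootPotential L ((m + 1) * L) := by
  have htel := sum_range_sub (fun k : ℕ => overshootPotential L (k * L)) (m + 1)
  have h0 : overshootPotential L 0 = 0 := by simp [overshootPotential]
  simp only [Nat.cast_zero, zero_mul, h0, sub_zero, Nat.cast_add, Nat.cast_one] at htel
  rw [overshootFactor, mul_sum, ← htel]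
  gcongr with k
  simpa [add_mul] using mul_min_le_overshootPotential_sub hL (k * L)

lemma overshootFactor_lt_one (hL : 0 ≤ L) (hsmall : ((m : ℝ) + 3 / 2) * L < 3 / 2) :
    overshootFactor m L < 1 := by
  have hm : (0 : ℝ) ≤ m := m.cast_nonneg
  have hL1 : L < 1 := by nlinarith
  refine (overshootFactor_le_overshootPotential hL).trans_lt ?_
  unfold overshootPotential
  split_ifs with h
  · nlinarith [mul_le_mul_of_nonneg_right h (by positivity : 0 ≤ ((m : ℝ) + 1) * L + L)]
  · linarith

end Overshoot

lemma exists_tendsto_of_antitone_from {u : ℕ → ℝ} {N : ℕ} {a : ℝ}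
    (hu : ∀ n ≥ N, u (n + 1) ≤ u n) (ha : ∀ n ≥ N, a ≤ u n) :
    ∃ ℓ, a ≤ ℓ ∧ Tendsto u atTop (𝓝 ℓ) := by
  have hanti : Antitone fun k => u (k + N) :=
    antitone_nat_of_succ_le fun k => by simpa [add_right_comm] using hu (k + N) (by omega)
  have hbdd : BddBelow (Set.range fun k => u (k + N)) :=
    ⟨a, by rintro _ ⟨k, rfl⟩; exact ha _ (by omega)⟩
  exact ⟨_, le_ciInf fun k => ha _ (by omega),
    (tendsto_add_atTop_iff_nat N).1 (tendsto_atTop_ciInf hanti hbdd)⟩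

lemma Nat.exists_last_before {P : ℕ → Prop} [DecidablePred P] {a b : ℕ} (hab : a ≤ b)
    (ha : P a) (hb : ¬ P b) : ∃ t, a ≤ t ∧ t < b ∧ P t ∧ ∀ u, t < u → u ≤ b → ¬ P u := by
  refine ⟨Nat.findGreatest P b, Nat.le_findGreatest hab ha, ?_, Nat.findGreatest_spec hab ha,
    fun u h₁ h₂ => Nat.findGreatest_is_greatest h₁ h₂⟩
  refine (Nat.findGreatest_le b).lt_of_ne fun h => hb ?_
  exact h ▸ Nat.findGreatest_spec hab ha

lemma le_mul_max_neg_of_abs_le {u v L : ℝ} (h : |v| ≤ L * |u|) (hsign : 0 ≤ u → v ≤ 0) :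
    v ≤ L * max (-u) 0 := by
  rcases le_or_gt 0 u with hu | hu
  · rw [max_eq_right (by linarith)]
    simpa using hsign hu
  · rw [max_eq_left (by linarith), ← abs_of_neg hu]
    exact (le_abs_self v).trans h

lemma eq_zero_of_le_mul_neg_of_neg_le_mul {S I Φ : ℝ} (hΦ0 : 0 ≤ Φ) (hΦ1 : Φ < 1)
    (hS : S ≤ Φ * -I) (hI : -I ≤ Φ * S) (hIS : I ≤ S) : S = 0 ∧ I = 0 := by
  have hS' : S ≤ Φ ^ 2 * S := hS.trans (by nlinarith [mul_le_mul_of_nonneg_left hI hΦ0])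
  have hI' : -I ≤ Φ ^ 2 * -I := hI.trans (by nlinarith [mul_le_mul_of_nonneg_left hS hΦ0])
  have hsq : Φ ^ 2 < 1 := by nlinarith
  constructor <;> nlinarith

lemma tendsto_of_tendsto_comp_sub_natCast {α : Type*} {A : ℤ → α} {m : ℕ} {l : Filter α}
    (h : Tendsto (fun k : ℕ => A (k - m)) atTop l) : Tendsto A atTop l := by
  have htoNat : Tendsto (fun n : ℤ => (n + m).toNat) atTop atTop :=
    tendsto_atTop_atTop.2 fun b => ⟨b, fun n hn => by omega⟩
  refine (h.comp htoNat).congr' ?_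
  filter_upwards [eventually_ge_atTop (-(m : ℤ))] with n hn
  simp [Int.toNat_of_nonneg (by omega : 0 ≤ n + m)]

section DelayRecurrence

variable {m : ℕ} {x y : ℕ → ℝ}

lemma delay_telescope (hrec : ∀ n, x (n + m + 1) = x (n + m) + y n) (n k : ℕ) :
    x (n + m + k) = x (n + m) + ∑ i ∈ range k, y (n + i) := by
  induction k with
  | zero => simp
  | succ k ih =>
    rw [show n + m + (k + 1) = n + k + m + 1 by ring, hrec, show n + k + m = n + m + k by ring, ih,
      sum_range_succ, add_assoc]

lemma frequently_le_of_delay (hrec : ∀ n, x (n + m + 1) = x (n + m) + y n)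
    (hsign : ∀ n, 0 ≤ x n → y n ≤ 0) (hlim : ∀ ℓ, Tendsto x atTop (𝓝 ℓ) → ℓ = 0)
    {ε : ℝ} (hε : 0 < ε) : ∃ᶠ n in atTop, x n ≤ ε := by
  by_contra h
  obtain ⟨N, hN⟩ := eventually_atTop.1 (not_frequently.1 h)
  have hdesc : ∀ n ≥ N + m, x (n + 1) ≤ x n := by
    intro n hn
    obtain ⟨p, rfl⟩ : ∃ p, n = p + m := ⟨n - m, by omega⟩
    rw [hrec]
    linarith [hsign p (by linarith [not_le.1 (hN p (by omega))])]
  obtain ⟨ℓ, hεℓ, hℓ⟩ :=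
    exists_tendsto_of_antitone_from hdesc fun n hn => (not_le.1 (hN n (by omega))).le
  linarith [hlim ℓ hℓ]

lemma eventually_lt_of_delay (hrec : ∀ n, x (n + m + 1) = x (n + m) + y n) {K : ℝ} (hK : 0 < K)
    (hyK : ∀ᶠ n in atTop, y n ≤ K) (hsign : ∀ n, 0 ≤ x n → y n ≤ 0)
    (hlim : ∀ ℓ, Tendsto x atTop (𝓝 ℓ) → ℓ = 0) : ∀ᶠ n in atTop, x n < (m + 1) * K := by
  obtain ⟨N, hN⟩ := eventually_atTop.1 hyK
  -- a rise at time `p + 2m` needs `x (p + m) < 0`, and `m + 1` steps then add at most `(m + 1) K`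
  have hdesc : ∀ n ≥ N + m + m, (m + 1) * K ≤ x (n + 1) → x (n + 1) ≤ x n := by
    intro n hn hKx
    obtain ⟨p, rfl⟩ : ∃ p, n = p + m + m := ⟨n - m - m, by omega⟩
    by_contra! hrise
    have hneg : x (p + m) < 0 := not_le.1 fun h => by linarith [hsign _ h, hrec (p + m)]
    have hsum : ∑ i ∈ range (m + 1), y (p + i) ≤ (m + 1) * K := by
      simpa using sum_le_card_nsmul (range (m + 1)) _ K fun i _ => hN _ (by omega)
    have htel := delay_telescope hrec p (m + 1)
    rw [← add_assoc] at htel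
    linarith
  have hm : (0 : ℝ) < (m + 1) * K := by positivity
  obtain ⟨n₀, hxn₀, hn₀⟩ := ((frequently_le_of_delay hrec hsign hlim (half_pos hm)).and_eventually
    (eventually_ge_atTop (N + m + m))).exists
  filter_upwards [eventually_ge_atTop n₀] with n hn
  induction n, hn using Nat.le_induction with
  | base => linarith
  | succ n hn ih => exact not_le.1 fun h => by linarith [hdesc n (by omega) h]

lemma feedback_le_of_nonneg_succ (hrec : ∀ n, x (n + m + 1) = x (n + m) + y n) {L W : ℝ}
    (hL : 0 ≤ L) (hW : 0 ≤ W) {N t : ℕ} (hfeed : ∀ n ≥ N, y n ≤ L * max (-x n) 0)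
    (hlow : ∀ n ≥ N, -W ≤ x n) (ht : N + m + m ≤ t) (hx : 0 ≤ x (t + 1)) {j : ℕ} (hj : j ≤ m) :
    y (t - j) ≤ L * W * min 1 ((j + 1) * L) := by
  have hyW : ∀ n ≥ N, y n ≤ L * W := fun n hn =>
    (hfeed n hn).trans (mul_le_mul_of_nonneg_left (max_le (by linarith [hlow n hn]) hW) hL)
  obtain ⟨p, rfl⟩ : ∃ p, t = p + m + j := ⟨t - m - j, by omega⟩
  have htel := delay_telescope hrec p j
  have hsum : ∑ i ∈ range j, y (p + i) ≤ j * (L * W) := by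
    simpa using sum_le_card_nsmul (range j) _ _ fun i _ => hyW (p + i) (by omega)
  have hstep := hrec (p + j)
  rw [show p + j + m = p + m + j by ring] at hstep
  have hxj : -((j + 1) * (L * W)) ≤ x (p + m) := by
    nlinarith [hyW (p + j) (by omega)]
  rw [show p + m + j - j = p + m by omega]
  calc y (p + m) ≤ L * max (-x (p + m)) 0 := hfeed _ (by omega)
    _ ≤ L * (W * min 1 ((j + 1) * L)) := by
      gcongr
      rw [mul_min_of_nonneg _ _ hW]
      exact max_le (le_min (by linarith [hlow (p + m) (by omega)]) (by linarith)) (by positivity)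
    _ = L * W * min 1 ((j + 1) * L) := by ring

lemma le_add_sum_Ico_of_feedback_le (hrec : ∀ n, x (n + m + 1) = x (n + m) + y n) {β : ℕ → ℝ}
    {t b : ℕ} (hmt : m ≤ t) (hback : ∀ j ≤ m, y (t - j) ≤ β j)
    (hafter : ∀ u, t < u → u ≤ b → y u ≤ 0) :
    ∀ k, t + k ≤ b → x (t + k) ≤ x t + ∑ j ∈ Ico (m + 1 - k) (m + 1), β j := by
  intro k
  induction k with
  | zero => simp
  | succ k ih =>
    intro hk
    have hstep := hrec (t + k - m)
    rw [show t + k - m + m = t + k by omega] at hstep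
    rw [← add_assoc, hstep]
    rcases le_or_gt k m with hkm | hkm
    · rw [show m + 1 - (k + 1) = m - k by omega, sum_eq_sum_Ico_succ_bot (by omega),
        show m - k + 1 = m + 1 - k by omega]
      have := hback (m - k) (by omega)
      rw [show t - (m - k) = t + k - m by omega] at this
      linarith [ih (by omega)]
    · rw [show m + 1 - (k + 1) = m + 1 - k by omega]
      linarith [ih (by omega), hafter (t + k - m) (by omega) (by omega)]

lemma le_add_overshootFactor_mul (hrec : ∀ n, x (n + m + 1) = x (n + m) + y n) {L W ε s : ℝ}
    (hL : 0 ≤ L) (hW : 0 ≤ W) (hε : 0 ≤ ε)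
    (hfeed : ∀ᶠ n in atTop, y n ≤ L * max (-x n) 0) (hlow : ∀ᶠ n in atTop, -W ≤ x n)
    (hle : ∃ᶠ n in atTop, x n ≤ ε) (hge : ∃ᶠ n in atTop, s ≤ x n) :
    s ≤ ε + overshootFactor m L * W := by
  rcases le_or_gt s ε with hs | hs
  · nlinarith [overshootFactor_nonneg (m := m) hL]
  obtain ⟨N, hN⟩ := eventually_atTop.1 (hfeed.and hlow)
  obtain ⟨a, hxa, ha⟩ := (hle.and_eventually (eventually_ge_atTop (N + m + m))).exists
  obtain ⟨b, hxb, hb⟩ := (hge.and_eventually (eventually_ge_atTop a)).exists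
  obtain ⟨t, hat, htb, hxt, hafter⟩ :=
    Nat.exists_last_before (P := fun n => x n ≤ ε) hb hxa (not_le.2 (hs.trans_le hxb))
  have hpos : ∀ u, t < u → u ≤ b → 0 < x u := fun u h₁ h₂ => hε.trans_lt (not_le.1 (hafter u h₁ h₂))
  set β : ℕ → ℝ := fun j => L * W * min 1 ((j + 1) * L) with hβ
  have hfwd := le_add_sum_Ico_of_feedback_le hrec (β := β) (t := t) (b := b) (by omega)
    (fun j hj => feedback_le_of_nonneg_succ hrec hL hW (fun n hn => (hN n hn).1)
      (fun n hn => (hN n hn).2) (by omega) (hpos _ (by omega) (by omega)).le hj)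
    (fun u h₁ h₂ => by
      simpa [max_eq_right (by linarith [hpos u h₁ h₂] : -x u ≤ 0)] using (hN u (by omega)).1)
  have hsumβ : ∑ j ∈ range (m + 1), β j = overshootFactor m L * W := by
    simp only [hβ, overshootFactor, ← mul_sum]
    ring
  calc s ≤ x (t + (b - t)) := by rwa [Nat.add_sub_cancel' htb.le]
    _ ≤ x t + ∑ j ∈ Ico (m + 1 - (b - t)) (m + 1), β j := hfwd _ (by omega)
    _ ≤ ε + ∑ j ∈ range (m + 1), β j := by
      refine add_le_add hxt (sum_le_sum_of_subset_of_nonneg ?_ fun j _ _ => by positivity)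
      rw [range_eq_Ico]
      exact Ico_subset_Ico (Nat.zero_le _) le_rfl
    _ = ε + overshootFactor m L * W := by rw [hsumβ]

lemma le_overshootFactor_mul_neg (hrec : ∀ n, x (n + m + 1) = x (n + m) + y n) {L S I : ℝ}
    (hL : 0 ≤ L) (hfeed : ∀ᶠ n in atTop, y n ≤ L * max (-x n) 0)
    (hfreq : ∀ ε > 0, ∃ᶠ n in atTop, x n ≤ ε) (hS : ∀ ε > 0, ∃ᶠ n in atTop, S - ε < x n)
    (hI : ∀ ε > 0, ∀ᶠ n in atTop, I - ε < x n) : S ≤ overshootFactor m L * -I := by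
  have hΦ : 0 ≤ overshootFactor m L := overshootFactor_nonneg hL
  refine le_of_forall_pos_le_add fun δ hδ => ?_
  set ε := δ / (2 * (1 + overshootFactor m L)) with hε_def
  have hε : 0 < ε := by positivity
  have hδε : 2 * ε * (1 + overshootFactor m L) = δ := by
    rw [hε_def]
    field_simp
  have hI2 : I < 2 * ε := by
    obtain ⟨n, h₁, h₂⟩ := ((hfreq ε hε).and_eventually (hI ε hε)).exists
    linarith
  have key := le_add_overshootFactor_mul hrec hL (W := -I + 2 * ε) (by linarith) hε.le hfeed
    ((hI ε hε).mono fun n h => by linarith) (hfreq ε hε) ((hS ε hε).mono fun n h => h.le)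
  linarith

end DelayRecurrence

lemma eq_zero_of_tendsto_of_delay {m : ℕ} {f : ℝ → ℝ} {x : ℕ → ℝ}
    (hrec : ∀ n, x (n + m + 1) = x (n + m) + f (x n)) (hf : Continuous f)
    (hf0 : ∀ u, f u = 0 → u = 0) {ℓ : ℝ} (h : Tendsto x atTop (𝓝 ℓ)) : ℓ = 0 := by
  have hshift (k : ℕ) : Tendsto (fun n => x (n + k)) atTop (𝓝 ℓ) :=
    (tendsto_add_atTop_iff_nat k).2 h
  have hdiff : Tendsto (fun n => f (x n)) atTop (𝓝 (ℓ - ℓ)) :=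
    ((hshift (m + 1)).sub (hshift m)).congr fun n => by rw [← add_assoc, hrec]; ring
  exact hf0 ℓ <|
    tendsto_nhds_unique ((hf.tendsto ℓ).comp h) (by simpa [Function.comp_def] using hdiff)

theorem tendsto_zero_of_delay {m : ℕ} {f : ℝ → ℝ} {x : ℕ → ℝ} {K L : ℝ}
    (hrec : ∀ n, x (n + m + 1) = x (n + m) + f (x n)) (hf : Continuous f)
    (hf0 : ∀ u, f u = 0 → u = 0) (hK : 0 < K) (hfK : ∀ u, f u ≤ K)
    (hf_nonpos : ∀ u, 0 ≤ u → f u ≤ 0) (hf_nonneg : ∀ u, u ≤ 0 → 0 ≤ f u) (hL : 0 < L)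
    (hlip : ∀ u, u < (m + 1) * K → |f u| ≤ L * |u|) (hsmall : ((m : ℝ) + 3 / 2) * L < 3 / 2) :
    Tendsto x atTop (𝓝 0) := by
  have hlim : ∀ ℓ, Tendsto x atTop (𝓝 ℓ) → ℓ = 0 := fun ℓ => eq_zero_of_tendsto_of_delay hrec hf hf0
  have hlim' : ∀ ℓ, Tendsto (fun n => -x n) atTop (𝓝 ℓ) → ℓ = 0 := fun ℓ h => by
    simpa using hlim (-ℓ) (by simpa using h.neg)
  have hrec' : ∀ n, -x (n + m + 1) = -x (n + m) + -f (x n) := fun n => by rw [hrec]; ring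
  have hsign' : ∀ n, 0 ≤ -x n → -f (x n) ≤ 0 := fun n h => neg_nonpos.2 (hf_nonneg _ (by linarith))
  have hup := eventually_lt_of_delay hrec hK (Eventually.of_forall fun n => hfK (x n))
    (fun n => hf_nonpos _) hlim
  have hfeed : ∀ᶠ n in atTop, f (x n) ≤ L * max (-x n) 0 :=
    hup.mono fun n h => le_mul_max_neg_of_abs_le (hlip _ h) (hf_nonpos _)
  have hfeed' : ∀ᶠ n in atTop, -f (x n) ≤ L * max (-(-x n)) 0 :=
    hup.mono fun n h => le_mul_max_neg_of_abs_le (by simpa using hlip _ h) (hsign' n)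
  -- below `(m + 1) K` the Lipschitz bound caps `-f` by `L (m + 1) K`, the role `K` plays for `x`
  have hdown := eventually_lt_of_delay hrec' (K := L * ((m + 1) * K)) (by positivity)
    ((hup.and hfeed').mono fun n h => by
      rw [neg_neg] at h
      exact h.2.trans (mul_le_mul_of_nonneg_left (max_le h.1.le (by positivity)) hL.le))
    hsign' hlim'
  have hU : IsBoundedUnder (· ≤ ·) atTop x :=
    isBoundedUnder_of_eventually_le (hup.mono fun _ h => h.le)
  have hB : IsBoundedUnder (· ≥ ·) atTop x :=
    isBoundedUnder_of_eventually_ge (hdown.mono fun _ h => (neg_lt.1 h).le)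
  have hS := le_overshootFactor_mul_neg hrec hL.le hfeed
    (fun ε hε => frequently_le_of_delay hrec (fun n => hf_nonpos _) hlim hε)
    (fun ε hε => frequently_lt_of_lt_limsup hB.isCoboundedUnder_le (by linarith))
    (fun ε hε => eventually_lt_of_lt_liminf (by linarith) hB)
  have hI := le_overshootFactor_mul_neg hrec' hL.le hfeed'
    (fun ε hε => frequently_le_of_delay hrec' hsign' hlim' hε)
    (S := -liminf x atTop) (I := -limsup x atTop)
    (fun ε hε => (frequently_lt_of_liminf_lt hU.isCoboundedUnder_ge
      (by linarith : liminf x atTop < liminf x atTop + ε)).mono fun n h => by linarith)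
    (fun ε hε => (eventually_lt_of_limsup_lt (by linarith : limsup x atTop < limsup x atTop + ε)
      hU).mono fun n h => by linarith)
  obtain ⟨hS0, hI0⟩ := eq_zero_of_le_mul_neg_of_neg_le_mul (overshootFactor_nonneg hL.le)
    (overshootFactor_lt_one hL.le hsmall) hS (by rwa [neg_neg] at hI) (liminf_le_limsup hU hB)
  exact tendsto_of_liminf_eq_limsup hI0 hS0 hU hB

noncomputable def logFeedback (F : ℝ → ℝ) (xbar u : ℝ) : ℝ :=
  Real.log (F (xbar * Real.exp u))

section LogFeedback

variable {F : ℝ → ℝ} {xbar : ℝ}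

lemma continuous_logFeedback (hxbar : 0 < xbar) (hcont : ContinuousOn F (Set.Ioi 0))
    (hFpos : ∀ x, 0 < x → 0 < F x) : Continuous (logFeedback F xbar) := by
  have hg : Continuous fun u => F (xbar * Real.exp u) :=
    hcont.comp_continuous (by fun_prop) fun u => Set.mem_Ioi.2 (by positivity)
  exact hg.log fun u => (hFpos _ (by positivity)).ne'

lemma logFeedback_le {c : ℝ} (hxbar : 0 < xbar) (hFc : ∀ x, 0 < x → 0 < F x ∧ F x ≤ c) (u : ℝ) :
    logFeedback F xbar u ≤ Real.log c :=
  have hF := hFc (xbar * Real.exp u) (by positivity)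
  Real.log_le_log hF.1 hF.2

lemma logFeedback_nonpos (hxbar : 0 < xbar) (hFpos : ∀ x, 0 < x → 0 < F x)
    (hmono : ∀ x, 0 < x → (F x ≤ 1 ↔ xbar ≤ x)) {u : ℝ} (hu : 0 ≤ u) :
    logFeedback F xbar u ≤ 0 := by
  have hx : 0 < xbar * Real.exp u := by positivity
  refine Real.log_nonpos (hFpos _ hx).le ((hmono _ hx).2 ?_)
  exact le_mul_of_one_le_right hxbar.le (Real.one_le_exp hu)

lemma logFeedback_nonneg (hxbar : 0 < xbar) (hF1 : F xbar = 1)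
    (hmono : ∀ x, 0 < x → (F x ≤ 1 ↔ xbar ≤ x)) {u : ℝ} (hu : u ≤ 0) :
    0 ≤ logFeedback F xbar u := by
  refine Real.log_nonneg ?_
  rcases hu.lt_or_eq with hu | rfl
  · refine (not_le.1 fun h => ?_).le
    have := (hmono _ (by positivity)).1 h
    nlinarith [Real.exp_lt_one_iff.2 hu]
  · simp [hF1]

lemma eq_zero_of_logFeedback_eq_zero (hxbar : 0 < xbar) (hFpos : ∀ x, 0 < x → 0 < F x)
    (huniq : ∀ y, 0 < y → F y = 1 → y = xbar) {u : ℝ} (hu : logFeedback F xbar u = 0) : u = 0 := by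
  have hx : 0 < xbar * Real.exp u := by positivity
  have h := huniq _ hx (Real.eq_one_of_pos_of_log_eq_zero (hFpos _ hx) hu)
  simpa using (mul_eq_left₀ hxbar.ne').1 h

lemma abs_logFeedback_le {c L : ℝ} {m : ℕ} (hxbar : 0 < xbar) (hc : 0 < c)
    (hLip : ∀ x, 0 < x → x < xbar * c ^ (m + 1) → |Real.log (F x)| ≤ L * |Real.log (x / xbar)|)
    {u : ℝ} (hu : u < (m + 1) * Real.log c) : |logFeedback F xbar u| ≤ L * |u| := by
  have hlt : Real.exp u < c ^ (m + 1) := by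
    rwa [← Real.exp_log (pow_pos hc _), Real.exp_lt_exp, Real.log_pow, Nat.cast_add_one]
  simpa [logFeedback, hxbar.ne'] using hLip _ (by positivity) (mul_lt_mul_of_pos_left hlt hxbar)

lemma log_div_delay_rec {m : ℕ} {a : ℕ → ℝ} (hxbar : 0 < xbar) (hFpos : ∀ x, 0 < x → 0 < F x)
    (ha : ∀ n, 0 < a n) (hrec : ∀ n, a (n + m + 1) = a (n + m) * F (a n)) (n : ℕ) :
    Real.log (a (n + m + 1) / xbar) =
      Real.log (a (n + m) / xbar) + logFeedback F xbar (Real.log (a n / xbar)) := by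
  have han : xbar * Real.exp (Real.log (a n / xbar)) = a n := by
    rw [Real.exp_log (div_pos (ha n) hxbar), mul_div_cancel₀ _ hxbar.ne']
  rw [logFeedback, han, hrec, mul_div_right_comm,
    Real.log_mul (div_pos (ha _) hxbar).ne' (hFpos _ (ha n)).ne']

end LogFeedback

theorem stmt_6_general (m : ℕ) (F : ℝ → ℝ) (c α xbar L : ℝ)
    (hFc : ∀ x : ℝ, 0 < x → 0 < F x ∧ F x ≤ c)
    (hcont : ContinuousOn F (Set.Ioi (0 : ℝ)))
    (hxbar : 0 < xbar ∧ F xbar = 1 ∧ ∀ y : ℝ, 0 < y → F y = 1 → y = xbar)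
    (hbounds : 0 < α ∧ α < 1 ∧ 1 < c)
    (hmono : ∀ x : ℝ, 0 < x → (F x ≤ 1 ↔ xbar ≤ x))
    (hL : 0 < L)
    (hLip : ∀ x : ℝ, 0 < x → x < xbar * c ^ (m + 1) →
      |Real.log (F x)| ≤ L * |Real.log (x / xbar)|)
    (hsmall : ((m : ℝ) + 3 / 2) * L < 3 / 2)
    (A : ℤ → ℝ)
    (hApos : ∀ n : ℤ, -(m : ℤ) ≤ n → 0 < A n)
    (hArec : ∀ n : ℤ, 0 ≤ n → A (n + 1) = A n * F (A (n - m))) :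
    Filter.Tendsto A Filter.atTop (nhds xbar) := by
  obtain ⟨hxb, hF1, huniq⟩ := hxbar
  have hc1 : 1 < c := hbounds.2.2
  have hFpos : ∀ x, 0 < x → 0 < F x := fun x hx => (hFc x hx).1
  set a : ℕ → ℝ := fun k => A (k - m) with ha_def
  have ha : ∀ k, 0 < a k := fun k => hApos _ (by omega)
  have harec : ∀ n, a (n + m + 1) = a (n + m) * F (a n) := fun n => by
    simp only [ha_def]
    push_cast
    rw [show (n : ℤ) + m + 1 - m = n + 1 by ring, add_sub_cancel_right]
    exact hArec n (by positivity)
  have hx := tendsto_zero_of_delay (x := fun k => Real.log (a k / xbar))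
    (log_div_delay_rec hxb hFpos ha harec) (continuous_logFeedback hxb hcont hFpos)
    (fun u => eq_zero_of_logFeedback_eq_zero hxb hFpos huniq)
    (Real.log_pos hc1) (logFeedback_le hxb hFc) (fun u => logFeedback_nonpos hxb hFpos hmono)
    (fun u => logFeedback_nonneg hxb hF1 hmono) hL
    (fun u => abs_logFeedback_le hxb (by linarith) hLip) hsmall
  refine tendsto_of_tendsto_comp_sub_natCast (m := m) ?_
  have hexp := ((Real.continuous_exp.tendsto 0).comp hx).const_mul xbar
  simpa [Function.comp_def, Real.exp_log (div_pos (ha _) hxb), mul_div_cancel₀ _ hxb.ne'] using hexp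

/-- 3/2-stability: under the standing hypotheses, a log-Lipschitz condition on `F`
with constant `L` on `(0, x̄ c^{m+1})`, and `(m + 3/2) L < 3/2`, every positive
solution of `A_{n+1} = A_n F(A_{n-m})` converges to the equilibrium `x̄`. -/
theorem stmt_6 (m : ℕ) (F : ℝ → ℝ) (c α xbar L : ℝ)
    (hFc : ∀ x : ℝ, 0 < x → 0 < F x ∧ F x ≤ c)
    (hcont : ContinuousOn F (Set.Ioi (0 : ℝ)))
    (hsup : Filter.limsup F Filter.atTop < 1)
    (hinf : 1 < Filter.liminf F (nhdsWithin 0 (Set.Ioi (0 : ℝ))))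
    (hxbar : 0 < xbar ∧ F xbar = 1 ∧ ∀ y : ℝ, 0 < y → F y = 1 → y = xbar)
    (hα : α = sInf (F '' Set.Ioi 0))
    (hc : c = sSup (F '' Set.Ioi 0))
    (hbounds : 0 < α ∧ α < 1 ∧ 1 < c)
    (hmono : ∀ x : ℝ, 0 < x → (F x ≤ 1 ↔ xbar ≤ x))
    (hL : 0 < L)
    (hLip : ∀ x : ℝ, 0 < x → x < xbar * c ^ (m + 1) →
      |Real.log (F x)| ≤ L * |Real.log (x / xbar)|)
    (hsmall : ((m : ℝ) + 3 / 2) * L < 3 / 2)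
    (A : ℤ → ℝ)
    (hApos : ∀ n : ℤ, -(m : ℤ) ≤ n → 0 < A n)
    (hArec : ∀ n : ℤ, 0 ≤ n → A (n + 1) = A n * F (A (n - m))) :
    Filter.Tendsto A Filter.atTop (nhds xbar) :=
  stmt_6_general m F c α xbar L hFc hcont hxbar hbounds hmono hL hLip hsmall A hApos hArec
end

section
/- Assume the hypotheses: 0 < F(x) ≤ c for all x > 0, limsup_{x→∞} F(x) < 1, liminf_{x→0⁺} F(x) > 1; there is a unique x̄ > 0 with F(x̄) = 1; 0 < α := inf_{x>0} F(x) < 1 < c := sup_{x>0} F(x) < ∞; and F(x) ≤ 1 if and only if x ≥ x̄. Then every positive solution (A_n)_{n≥−m} of A_{n+1} = A_n·F(A_{n−m}) that is eventually nonoscillatory about x̄ (i.e. A_n ≥ x̄ for all sufficiently large n, or A_n ≤ x̄ for all sufficiently large n) converges to x̄ as n → ∞. -/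
/-!
An eventually nonoscillatory solution is eventually monotone: if `A_n ≤ x̄` from some index on,
then `F(A_{n-m}) ≥ 1` a delay later, so `A_{n+1} ≥ A_n`; symmetrically for `A_n ≥ x̄`. Being
bounded by `x̄` on the relevant side and positive, it converges to some `L > 0`, and passing to
the limit in the recurrence gives `L = L · F(L)`, i.e. `F(L) = 1`, which forces `L = x̄`.
-/

open Filter Set Topology

section MonotoneConvergence

variable {α β : Type*} [Preorder α] [IsDirectedOrder α]
  [ConditionallyCompleteLinearOrder β] [TopologicalSpace β] [OrderTopology β]
  {f : α → β} {a : α} {b : β}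

theorem MonotoneOn.exists_tendsto_atTop_of_le (hf : MonotoneOn f (Ici a))
    (hb : ∀ x ≥ a, f x ≤ b) : ∃ L, f a ≤ L ∧ L ≤ b ∧ Tendsto f atTop (𝓝 L) := by
  have : Nonempty (Ici a) := ⟨⟨a, self_mem_Ici⟩⟩
  have hbdd : BddAbove (range fun x : Ici a => f x) := ⟨b, by rintro _ ⟨x, rfl⟩; exact hb x x.2⟩
  refine ⟨⨆ x : Ici a, f x, le_ciSup hbdd ⟨a, self_mem_Ici⟩, ciSup_le fun x => hb x x.2, ?_⟩
  exact tendsto_comp_val_Ici_atTop.1 <|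
    tendsto_atTop_ciSup (fun x y hxy => hf x.2 y.2 hxy) hbdd

theorem AntitoneOn.exists_tendsto_atTop_of_ge (hf : AntitoneOn f (Ici a))
    (hb : ∀ x ≥ a, b ≤ f x) : ∃ L, L ≤ f a ∧ b ≤ L ∧ Tendsto f atTop (𝓝 L) :=
  MonotoneOn.exists_tendsto_atTop_of_le (β := βᵒᵈ) hf hb

end MonotoneConvergence

theorem one_le_apply_of_le {F : ℝ → ℝ} {xbar x : ℝ} (hFxbar : F xbar = 1)
    (hmono : ∀ x : ℝ, 0 < x → (F x ≤ 1 ↔ xbar ≤ x)) (hx : 0 < x) (h : x ≤ xbar) : 1 ≤ F x := by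
  rcases h.eq_or_lt with rfl | hlt
  · exact hFxbar.ge
  · exact le_of_not_ge fun hF => hlt.not_ge ((hmono x hx).1 hF)

def SolvesDelayEq (m : ℕ) (F : ℝ → ℝ) (A : ℤ → ℝ) : Prop :=
  ∀ n : ℤ, 0 ≤ n → A (n + 1) = A n * F (A (n - m))

namespace SolvesDelayEq

variable {m : ℕ} {F : ℝ → ℝ} {A : ℤ → ℝ} {xbar : ℝ}

theorem apply_eq_one_of_tendsto {L : ℝ} (hA : SolvesDelayEq m F A) (hF : ContinuousAt F L)
    (hL : L ≠ 0) (hlim : Tendsto A atTop (𝓝 L)) : F L = 1 := by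
  have hshift (k : ℤ) : Tendsto (fun n => A (n + k)) atTop (𝓝 L) :=
    hlim.comp (tendsto_atTop_add_const_right atTop k tendsto_id)
  have hrhs : Tendsto (fun n => A n * F (A (n - m))) atTop (𝓝 (L * F L)) :=
    hlim.mul (hF.tendsto.comp (by simpa only [sub_eq_add_neg] using hshift (-m)))
  have hlhs : Tendsto (fun n => A (n + 1)) atTop (𝓝 (L * F L)) :=
    hrhs.congr' (eventually_atTop.2 ⟨0, fun n hn => (hA n hn).symm⟩)
  exact (mul_eq_left₀ hL).1 (tendsto_nhds_unique (hshift 1) hlhs).symm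

theorem tendsto_of_eventually_le (hA : SolvesDelayEq m F A)
    (hApos : ∀ n : ℤ, -(m : ℤ) ≤ n → 0 < A n) (hF : ContinuousOn F (Ioi 0))
    (hFxbar : F xbar = 1) (hmono : ∀ x : ℝ, 0 < x → (F x ≤ 1 ↔ xbar ≤ x))
    (hle : ∀ᶠ n in atTop, A n ≤ xbar) : Tendsto A atTop (𝓝 xbar) := by
  obtain ⟨N, hN⟩ := eventually_atTop.1 (hle.and (eventually_ge_atTop 0))
  have hN0 : 0 ≤ N := (hN N le_rfl).2
  have hstep (n : ℤ) (hn : N + m ≤ n) : A n ≤ A (n + 1) := by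
    rw [hA n (by omega)]
    exact le_mul_of_one_le_right (hApos n (by omega)).le <|
      one_le_apply_of_le hFxbar hmono (hApos _ (by omega)) (hN (n - m) (by omega)).1
  have hmon : MonotoneOn A (Ici (N + m)) :=
    monotoneOn_of_le_succ ordConnected_Ici fun n _ hn _ => by
      simpa only [Order.succ_eq_add_one] using hstep n hn
  obtain ⟨L, hAL, hLx, hlim⟩ :=
    hmon.exists_tendsto_atTop_of_le fun n hn => (hN n (by omega)).1
  have hL : 0 < L := (hApos _ (by omega)).trans_le hAL
  have hFL := hA.apply_eq_one_of_tendsto (hF.continuousAt (Ioi_mem_nhds hL)) hL.ne' hlim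
  rwa [hLx.antisymm ((hmono L hL).1 hFL.le)] at hlim

theorem tendsto_of_eventually_ge (hA : SolvesDelayEq m F A) (hF : ContinuousOn F (Ioi 0))
    (hxbar : 0 < xbar) (huniq : ∀ y : ℝ, 0 < y → F y = 1 → y = xbar)
    (hmono : ∀ x : ℝ, 0 < x → (F x ≤ 1 ↔ xbar ≤ x))
    (hge : ∀ᶠ n in atTop, xbar ≤ A n) : Tendsto A atTop (𝓝 xbar) := by
  obtain ⟨N, hN⟩ := eventually_atTop.1 (hge.and (eventually_ge_atTop 0))
  have hN0 : 0 ≤ N := (hN N le_rfl).2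
  have hstep (n : ℤ) (hn : N + m ≤ n) : A (n + 1) ≤ A n := by
    have hAn := hxbar.trans_le (hN n (by omega)).1
    have hAnm := (hN (n - m) (by omega)).1
    rw [hA n (by omega)]
    exact mul_le_of_le_one_right hAn.le ((hmono _ (hxbar.trans_le hAnm)).2 hAnm)
  have hanti : AntitoneOn A (Ici (N + m)) :=
    antitoneOn_of_succ_le ordConnected_Ici fun n _ hn _ => by
      simpa only [Order.succ_eq_add_one] using hstep n hn
  obtain ⟨L, -, hxL, hlim⟩ :=
    hanti.exists_tendsto_atTop_of_ge fun n hn => (hN n (by omega)).1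
  have hL : 0 < L := hxbar.trans_le hxL
  have hFL := hA.apply_eq_one_of_tendsto (hF.continuousAt (Ioi_mem_nhds hL)) hL.ne' hlim
  rwa [huniq L hL hFL] at hlim

end SolvesDelayEq

theorem stmt_7_general (m : ℕ) (F : ℝ → ℝ) (xbar : ℝ)
    (hcont : ContinuousOn F (Set.Ioi (0 : ℝ)))
    (hxbar : 0 < xbar ∧ F xbar = 1 ∧ ∀ y : ℝ, 0 < y → F y = 1 → y = xbar)
    (hmono : ∀ x : ℝ, 0 < x → (F x ≤ 1 ↔ xbar ≤ x))
    (A : ℤ → ℝ)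
    (hApos : ∀ n : ℤ, -(m : ℤ) ≤ n → 0 < A n)
    (hArec : ∀ n : ℤ, 0 ≤ n → A (n + 1) = A n * F (A (n - m)))
    (hnonosc : (∀ᶠ n : ℤ in Filter.atTop, xbar ≤ A n) ∨
      (∀ᶠ n : ℤ in Filter.atTop, A n ≤ xbar)) :
    Filter.Tendsto A Filter.atTop (nhds xbar) := by
  obtain ⟨hxpos, hFxbar, huniq⟩ := hxbar
  rcases hnonosc with hge | hle
  · exact SolvesDelayEq.tendsto_of_eventually_ge hArec hcont hxpos huniq hmono hge
  · exact SolvesDelayEq.tendsto_of_eventually_le hArec hApos hcont hFxbar hmono hle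

/-- Every eventually nonoscillatory (about `x̄`) positive solution of
`A_{n+1} = A_n F(A_{n-m})` converges to the equilibrium `x̄`. -/
theorem stmt_7 (m : ℕ) (F : ℝ → ℝ) (c α xbar : ℝ)
    (hFc : ∀ x : ℝ, 0 < x → 0 < F x ∧ F x ≤ c)
    (hcont : ContinuousOn F (Set.Ioi (0 : ℝ)))
    (hsup : Filter.limsup F Filter.atTop < 1)
    (hinf : 1 < Filter.liminf F (nhdsWithin 0 (Set.Ioi (0 : ℝ))))
    (hxbar : 0 < xbar ∧ F xbar = 1 ∧ ∀ y : ℝ, 0 < y → F y = 1 → y = xbar)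
    (hα : α = sInf (F '' Set.Ioi 0))
    (hc : c = sSup (F '' Set.Ioi 0))
    (hbounds : 0 < α ∧ α < 1 ∧ 1 < c)
    (hmono : ∀ x : ℝ, 0 < x → (F x ≤ 1 ↔ xbar ≤ x))
    (A : ℤ → ℝ)
    (hApos : ∀ n : ℤ, -(m : ℤ) ≤ n → 0 < A n)
    (hArec : ∀ n : ℤ, 0 ≤ n → A (n + 1) = A n * F (A (n - m)))
    (hnonosc : (∀ᶠ n : ℤ in Filter.atTop, xbar ≤ A n) ∨
      (∀ᶠ n : ℤ in Filter.atTop, A n ≤ xbar)) :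
    Filter.Tendsto A Filter.atTop (nhds xbar) :=
  stmt_7_general m F xbar hcont hxbar hmono A hApos hArec hnonosc
end

section
/- Let 0 < α < 1, β > 0 with α + β > 1, r > 0, let F(x) = α + β/(1 + x^r) for x > 0, and let x̄ = ((α + β − 1)/(1 − α))^{1/r}, so that F(x̄) = 1. Then for all x > 0, |ln F(x)| ≤ L·|ln(x/x̄)| where L = βr/(2α + β + 2√(α² + αβ)). -/
/-!
In the coordinate `t = ln x` the map `ln F` becomes `g t = ln (α + β / (1 + u))` with `u = e^{rt}`,
whose derivative is `-β r u / ((1 + u) (α (1 + u) + β))`. Since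
`(1 + u)(α(1 + u) + β) = α u² + (2α + β) u + (α + β) ≥ (2α + β + 2√(α(α + β))) u` by AM-GM, `|g'| ≤ L`,
and the mean value theorem between `ln x̄` and `ln x` gives the estimate, because `g (ln x̄) = ln 1 = 0`.
-/

open Real

namespace Bobwhite

/-- The map `ln ∘ F ∘ exp`. -/
noncomputable def logConj (α β r t : ℝ) : ℝ :=
  log (α + β / (1 + exp (r * t)))

variable {α β r : ℝ}

lemma mul_two_mul_add_add_sqrt_le (hα : 0 < α) (hβ : 0 ≤ β) (u : ℝ) :
    u * (2 * α + β + 2 * √(α ^ 2 + α * β)) ≤ (1 + u) * (α * (1 + u) + β) := by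
  have hs : √(α ^ 2 + α * β) ^ 2 = α ^ 2 + α * β := sq_sqrt (by positivity)
  nlinarith [sq_nonneg (α * u - √(α ^ 2 + α * β))]

lemma hasDerivAt_logConj (hα : 0 < α) (hβ : 0 ≤ β) (t : ℝ) :
    HasDerivAt (logConj α β r)
      (-(β * r * exp (r * t) / ((1 + exp (r * t)) * (α * (1 + exp (r * t)) + β)))) t := by
  have hexp : HasDerivAt (fun t => 1 + exp (r * t)) (exp (r * t) * r) t :=
    (((hasDerivAt_id t).const_mul r).exp.const_add 1).congr_deriv (by simp)
  have hin : HasDerivAt (fun t => α + β / (1 + exp (r * t)))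
      ((0 * (1 + exp (r * t)) - β * (exp (r * t) * r)) / (1 + exp (r * t)) ^ 2) t :=
    ((hasDerivAt_const t β).div hexp (by positivity)).const_add α
  exact (hin.log (by positivity)).congr_deriv (by field_simp; ring)

lemma abs_mul_div_one_add_mul_le (hα : 0 < α) (hβ : 0 ≤ β) (hr : 0 ≤ r) (u : ℝ) (hu : 0 < u) :
    |β * r * u / ((1 + u) * (α * (1 + u) + β))| ≤
      β * r / (2 * α + β + 2 * √(α ^ 2 + α * β)) := by
  rw [abs_of_nonneg (by positivity), div_le_div_iff₀ (by positivity) (by positivity), mul_assoc]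
  exact mul_le_mul_of_nonneg_left (mul_two_mul_add_add_sqrt_le hα hβ u) (by positivity)

lemma abs_logConj_sub_le (hα : 0 < α) (hβ : 0 ≤ β) (hr : 0 ≤ r) (a b : ℝ) :
    |logConj α β r b - logConj α β r a| ≤
      β * r / (2 * α + β + 2 * √(α ^ 2 + α * β)) * |b - a| :=
  convex_univ.norm_image_sub_le_of_norm_hasDerivWithin_le
    (fun t _ => (hasDerivAt_logConj hα hβ t).hasDerivWithinAt)
    (fun t _ => by
      rw [norm_neg, Real.norm_eq_abs]
      exact abs_mul_div_one_add_mul_le hα hβ hr _ (exp_pos _))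
    (Set.mem_univ a) (Set.mem_univ b)

lemma logConj_log {x : ℝ} (hx : 0 < x) :
    logConj α β r (log x) = log (α + β / (1 + x ^ r)) := by
  rw [logConj, rpow_def_of_pos hx, mul_comm]

lemma add_div_one_add_equilibrium (hα1 : α ≠ 1) (hβ : β ≠ 0) :
    α + β / (1 + (α + β - 1) / (1 - α)) = 1 := by
  have : 1 - α ≠ 0 := sub_ne_zero.mpr hα1.symm
  have : 1 + (α + β - 1) / (1 - α) = β / (1 - α) := by field_simp; ring
  rw [this]
  field_simp
  ring

end Bobwhite

open Bobwhite in
/-- Log-Lipschitz estimate for the bobwhite quail nonlinearity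
`F(x) = α + β/(1 + x^r)` at its equilibrium `x̄ = ((α+β-1)/(1-α))^{1/r}`,
with constant `L = βr/(2α + β + 2√(α² + αβ))`. -/
theorem stmt_8 (α β r : ℝ) (hα : 0 < α) (hα1 : α < 1) (hβ : 0 < β)
    (hαβ : 1 < α + β) (hr : 0 < r)
    (F : ℝ → ℝ) (hF : ∀ x : ℝ, 0 < x → F x = α + β / (1 + x ^ r))
    (xbar : ℝ) (hxbar : xbar = ((α + β - 1) / (1 - α)) ^ (1 / r)) :
    F xbar = 1 ∧
      ∀ x : ℝ, 0 < x →
        |Real.log (F x)| ≤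
          (β * r / (2 * α + β + 2 * Real.sqrt (α ^ 2 + α * β))) *
            |Real.log (x / xbar)| := by
  have hc : 0 < (α + β - 1) / (1 - α) := div_pos (by linarith) (by linarith)
  have hxbar_pos : 0 < xbar := hxbar ▸ rpow_pos_of_pos hc _
  have hFxbar : F xbar = 1 := by
    rw [hF xbar hxbar_pos, hxbar, ← rpow_mul hc.le, one_div_mul_cancel hr.ne', rpow_one,
      add_div_one_add_equilibrium hα1.ne hβ.ne']
  refine ⟨hFxbar, fun x hx => ?_⟩
  have hlog_xbar : logConj α β r (log xbar) = 0 := by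
    rw [logConj_log hxbar_pos, ← hF xbar hxbar_pos, hFxbar, log_one]
  have := abs_logConj_sub_le hα hβ.le hr.le (log xbar) (log x)
  rwa [hlog_xbar, sub_zero, logConj_log hx, ← hF x hx, ← log_div hx.ne' hxbar_pos.ne'] at this
end

section
/- Let 0 < α < 1, β > 0 with α + β > 1, r > 0, and let m ≥ 0 be an integer. If m + 3/2 < (3/2)·(2α + β + 2√(α² + αβ))/(βr), then every positive solution (A_n)_{n≥−m} of A_{n+1} = A_n·(α + β/(1 + A_{n−m}^r)) converges to x̄ = ((α + β − 1)/(1 − α))^{1/r} as n → ∞. -/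
/-!
With `T = (α + β - 1) / (1 - α)` and `x̄ = T ^ (1 / r)`, the variable `y n = log (A n / x̄)`
satisfies `y (n + 1) = y n + g (y (n - m))` with `g u = log (α + β / (1 + T exp (r u)))`. This `g`
is bounded, has the sign of `-u`, and `|g u| ≤ L |u|` for `L = β r / (2α + β + 2√(α² + αβ))`, the
maximum of `|g'|` (AM-GM).

A solution that does not oscillate about `0` is eventually monotone and tends to a zero of `g`.
An oscillating solution is eventually bounded. If eventually `y ≥ -d`, a positive semicycle
starting after `p` rises only during its first `m + 1` steps, and the step reading `y (p - v)`
adds at most `L min (d, (v + 1) L d)`: the second bound holds because `y` climbs from `y (p - v)`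
to the positive `y (p + 1)` in `v + 1` steps of size at most `L d`. So an eventual bound `|y| ≤ d`
improves to `|y| ≤ K d` with `K = ∑_{v ≤ m} L min (1, (v + 1) L)`, and `(m + 3/2) L < 3/2` gives
`K < 1`.
-/

open Filter Finset Topology

namespace DelayDifference

def IsDelaySolution (g : ℝ → ℝ) (k : ℕ) (y : ℤ → ℝ) : Prop :=
  ∀ n : ℤ, 0 ≤ n → y (n + 1) = y n + g (y (n - k))

variable {g : ℝ → ℝ} {k : ℕ} {y : ℤ → ℝ}

theorem sum_range_le_of_le_of_nonpos {f c : ℕ → ℝ} {s : ℕ} (hc : ∀ i, 0 ≤ c i)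
    (hle : ∀ i < s, i ≤ k → f i ≤ c i) (hnonpos : ∀ i < s, k < i → f i ≤ 0) :
    ∑ i ∈ range s, f i ≤ ∑ i ∈ range (k + 1), c i := by
  rcases le_or_gt s (k + 1) with hs | hs
  · calc ∑ i ∈ range s, f i ≤ ∑ i ∈ range s, c i :=
          sum_le_sum fun i hi => hle i (mem_range.1 hi) (by have := mem_range.1 hi; omega)
      _ ≤ ∑ i ∈ range (k + 1), c i :=
          sum_le_sum_of_subset_of_nonneg (range_subset_range.2 hs) fun i _ _ => hc i
  · obtain ⟨t, rfl⟩ := Nat.exists_eq_add_of_lt hs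
    rw [show k + 1 + t + 1 = (k + 1) + (t + 1) by ring, sum_range_add]
    have h₁ : ∑ i ∈ range (k + 1), f i ≤ ∑ i ∈ range (k + 1), c i :=
      sum_le_sum fun i hi =>
        hle i (by have := mem_range.1 hi; omega) (Nat.lt_succ_iff.1 (mem_range.1 hi))
    have h₂ : ∑ i ∈ range (t + 1), f (k + 1 + i) ≤ 0 :=
      sum_nonpos fun i hi => hnonpos _ (by have := mem_range.1 hi; omega) (by omega)
    linarith

theorem le_of_forall_run_le {a : ℤ} {C : ℝ} (hC : 0 ≤ C) (ha : y a ≤ 0)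
    (hrun : ∀ p n, a ≤ p → p < n → y p ≤ 0 → (∀ i, p < i → i ≤ n → 0 < y i) → y n ≤ C) :
    ∀ n, a ≤ n → y n ≤ C := by
  intro n hn
  by_contra! hyn
  obtain ⟨p, ⟨hap, hpn, hyp⟩, hmax⟩ := Int.exists_greatest_of_bdd
    (P := fun p => a ≤ p ∧ p ≤ n ∧ y p ≤ 0) ⟨n, fun _ h => h.2.1⟩ ⟨a, le_rfl, hn, ha⟩
  have hpn' : p < n := lt_of_le_of_ne hpn (by rintro rfl; linarith)
  refine (hrun p n hap hpn' hyp fun i hpi hin => ?_).not_gt hyn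
  by_contra! hyi
  exact (hmax i ⟨by omega, hin, hyi⟩).not_gt hpi

namespace IsDelaySolution

theorem neg (hy : IsDelaySolution g k y) : IsDelaySolution (fun u => -g (-u)) k (-y) := by
  intro n hn
  simp only [Pi.neg_apply, neg_neg, hy n hn]
  ring

theorem eq_add_sum (hy : IsDelaySolution g k y) {a : ℤ} (ha : 0 ≤ a) (s : ℕ) :
    y (a + s) = y a + ∑ i ∈ range s, g (y (a + i - k)) := by
  induction s with
  | zero => simp
  | succ s ih =>
    rw [sum_range_succ, Nat.cast_succ, ← add_assoc, hy _ (by omega), ih]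
    ring

theorem le_add_mul (hy : IsDelaySolution g k y) {a : ℤ} (ha : 0 ≤ a) {s : ℕ} {C : ℝ}
    (hC : ∀ i < s, g (y (a + i - k)) ≤ C) : y (a + s) ≤ y a + s * C := by
  rw [hy.eq_add_sum ha]
  have := sum_le_card_nsmul (range s) _ C fun i hi => hC i (mem_range.1 hi)
  simp only [card_range, nsmul_eq_mul] at this
  linarith

theorem le_add_sum_of_pos_run (hy : IsDelaySolution g k y)
    (hneg : ∀ u, 0 < u → g u < 0) {p n : ℤ} (hp : 0 ≤ p) (hpn : p ≤ n)
    (hrun : ∀ i, p < i → i ≤ n → 0 < y i) {c : ℕ → ℝ} (hc0 : ∀ v, 0 ≤ c v)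
    (hc : ∀ v ≤ k, g (y (p - v)) ≤ c v) :
    y n ≤ y p + ∑ v ∈ range (k + 1), c v := by
  obtain ⟨s, rfl⟩ : ∃ s : ℕ, n = p + s := ⟨(n - p).toNat, by omega⟩
  rw [hy.eq_add_sum hp, ← sum_range_reflect c]
  gcongr
  refine sum_range_le_of_le_of_nonpos (fun i => hc0 _) (fun i _ hik => ?_) fun i his hki => ?_
  · rw [Nat.add_sub_cancel]
    have h := hc (k - i) (Nat.sub_le k i)
    rwa [show p - ((k - i : ℕ) : ℤ) = p + i - k by omega] at h
  · exact (hneg _ (hrun _ (by omega) (by omega))).le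

end IsDelaySolution

def semicycleFactor (L : ℝ) (k : ℕ) : ℝ :=
  ∑ v ∈ range (k + 1), L * min 1 ((v + 1) * L)

theorem semicycleFactor_nonneg {L : ℝ} (hL : 0 ≤ L) (k : ℕ) : 0 ≤ semicycleFactor L k := by
  unfold semicycleFactor
  positivity

theorem sum_range_cast_add_one (t : ℕ) : ∑ v ∈ range t, ((v : ℝ) + 1) = t * (t + 1) / 2 := by
  induction t with
  | zero => simp
  | succ t ih => rw [sum_range_succ, ih]; push_cast; ring

theorem semicycleFactor_le {L : ℝ} (hL : 0 ≤ L) {k t : ℕ} (ht : t ≤ k + 1) :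
    semicycleFactor L k ≤ L ^ 2 * (t * (t + 1) / 2) + ((k : ℝ) + 1 - t) * L := by
  obtain ⟨u, hu⟩ := Nat.exists_eq_add_of_le ht
  have hu' : (k : ℝ) + 1 - t = u := by rw [← Nat.cast_add_one, hu]; push_cast; ring
  rw [semicycleFactor, hu, sum_range_add, hu', ← sum_range_cast_add_one, mul_sum]
  refine add_le_add (sum_le_sum fun v _ => ?_) ?_
  · calc L * min 1 ((v + 1) * L) ≤ L * ((v + 1) * L) := by gcongr; exact min_le_right _ _
      _ = L ^ 2 * (v + 1) := by ring
  · calc ∑ v ∈ range u, L * min 1 ((((t + v : ℕ) : ℝ) + 1) * L)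
        ≤ ∑ v ∈ range u, L := sum_le_sum fun v _ => mul_le_of_le_one_right hL (min_le_left _ _)
      _ = u * L := by simp

theorem semicycleFactor_lt_one {L : ℝ} (hL : 0 < L) {k : ℕ} (h : L * (2 * k + 3) < 3) :
    semicycleFactor L k < 1 := by
  rcases le_or_gt ((k + 1) * L) 1 with hkL | hkL
  · have := semicycleFactor_le hL.le (le_refl (k + 1))
    push_cast at this
    have hk2 : ((k : ℝ) + 2) * L < 2 := by nlinarith [(k.cast_nonneg : (0 : ℝ) ≤ k)]
    nlinarith [mul_le_mul_of_nonneg_right hkL (by positivity : (0 : ℝ) ≤ (k + 2) * L)]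
  · set t := ⌊1 / L⌋₊
    have ht₁ : t * L ≤ 1 := (le_div_iff₀ hL).1 (Nat.floor_le (by positivity))
    have ht₂ : 1 < (t + 1) * L := (div_lt_iff₀ hL).1 (Nat.lt_floor_add_one _)
    have htk : t ≤ k + 1 := by
      have : (t : ℝ) < k + 1 := lt_of_mul_lt_mul_right (ht₁.trans_lt hkL) hL.le
      exact_mod_cast this.le
    have := semicycleFactor_le hL.le htk
    -- `2 K < 2 + (t L - 1) ((t + 1) L - 1)`, and the choice of `t` makes the product nonpositive
    nlinarith [mul_nonneg (sub_nonneg.2 ht₁) (sub_nonneg.2 ht₂.le)]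

theorem le_mul_max_neg_zero {L : ℝ} (hsector : ∀ u, |g u| ≤ L * |u|)
    (hneg : ∀ u, 0 < u → g u < 0) (u : ℝ) : g u ≤ L * max (-u) 0 := by
  rcases le_or_gt u 0 with hu | hu
  · calc g u ≤ L * |u| := (le_abs_self _).trans (hsector u)
      _ = L * max (-u) 0 := by rw [abs_of_nonpos hu, max_eq_left (by linarith)]
  · rw [max_eq_right (by linarith), mul_zero]
    exact (hneg u hu).le

theorem eventually_le_mul_of_abs_le (hy : IsDelaySolution g k y)
    (hneg : ∀ u, 0 < u → g u < 0) {M : ℝ} (hbdd : ∀ u, |g u| ≤ M)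
    (hosc : ∃ᶠ n in atTop, y n ≤ 0) : ∀ᶠ n in atTop, y n ≤ (k + 1) * M := by
  obtain ⟨a, ha, hya⟩ := frequently_atTop.1 hosc 0
  have hM : 0 ≤ M := (abs_nonneg _).trans (hbdd 0)
  filter_upwards [eventually_ge_atTop a] with n hn
  refine le_of_forall_run_le (by positivity) hya (fun p n hap hpn hyp hrun => ?_) n hn
  calc y n ≤ y p + ∑ v ∈ range (k + 1), M :=
        hy.le_add_sum_of_pos_run hneg (by omega) hpn.le hrun (fun _ => hM)
          fun v _ => (le_abs_self _).trans (hbdd _)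
    _ ≤ (k + 1) * M := by
        rw [sum_const, card_range, nsmul_eq_mul]
        push_cast
        linarith

theorem eventually_le_semicycleFactor_mul (hy : IsDelaySolution g k y)
    (hneg : ∀ u, 0 < u → g u < 0) {L : ℝ} (hsector : ∀ u, |g u| ≤ L * |u|)
    (hosc : ∃ᶠ n in atTop, y n ≤ 0) {d : ℝ} (hlow : ∀ᶠ n in atTop, -d ≤ y n) :
    ∀ᶠ n in atTop, y n ≤ semicycleFactor L k * d := by
  have hL : 0 ≤ L := by simpa using (abs_nonneg _).trans (hsector 1)
  obtain ⟨N, hN⟩ := eventually_atTop.1 hlow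
  obtain ⟨a, ha, hya⟩ := frequently_atTop.1 hosc (max N 0 + 2 * k)
  have hd : 0 ≤ d := by linarith [hN a (by omega)]
  have hstep : ∀ j, N ≤ j → g (y j) ≤ L * d := fun j hj =>
    (le_mul_max_neg_zero hsector hneg _).trans
      (mul_le_mul_of_nonneg_left (max_le (by linarith [hN j hj]) hd) hL)
  filter_upwards [eventually_ge_atTop a] with n hn
  refine le_of_forall_run_le (mul_nonneg (semicycleFactor_nonneg hL k) hd) hya
    (fun p n hap hpn hyp hrun => ?_) n hn
  have hclimb : ∀ v ≤ k, -y (p - v) ≤ (v + 1) * (L * d) := by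
    intro v hv
    have h := hy.le_add_mul (a := p - v) (s := v + 1) (C := L * d) (by omega)
      fun i _ => hstep _ (by omega)
    rw [show p - v + ((v + 1 : ℕ) : ℤ) = p + 1 by push_cast; ring] at h
    push_cast at h
    linarith [hrun (p + 1) (by omega) (by omega)]
  calc y n ≤ y p + ∑ v ∈ range (k + 1), L * (min 1 ((v + 1) * L) * d) := by
        refine hy.le_add_sum_of_pos_run hneg (by omega) hpn.le hrun
          (fun v => by positivity) fun v hv => ?_
        refine (le_mul_max_neg_zero hsector hneg _).trans (mul_le_mul_of_nonneg_left ?_ hL)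
        rw [min_mul_of_nonneg _ _ hd, one_mul]
        refine max_le (le_min (by linarith [hN (p - v) (by omega)]) ?_) (by positivity)
        linarith [hclimb v hv]
    _ ≤ semicycleFactor L k * d := by
        simp only [semicycleFactor, sum_mul, mul_assoc]
        linarith

theorem tendsto_zero_of_eventually_pos (hy : IsDelaySolution g k y) (hcont : Continuous g)
    (hneg : ∀ u, 0 < u → g u < 0) (hpos : ∀ᶠ n in atTop, 0 < y n) :
    Tendsto y atTop (𝓝 0) := by
  obtain ⟨N, hN⟩ := eventually_atTop.1 hpos
  set N' := max N 0 + k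
  have hstep : ∀ n, N' ≤ n → y (n + 1) < y n := fun n hn => by
    rw [hy n (by omega)]
    linarith [hneg _ (hN (n - k) (by omega))]
  have hanti : Antitone fun n => y (max n N') := antitone_int_of_succ_le fun n => by
    rcases le_or_gt N' n with h | h
    · rw [max_eq_left h, max_eq_left (by omega)]
      exact (hstep n h).le
    · rw [max_eq_right h.le, max_eq_right (by omega)]
  have hbdd : BddBelow (Set.range fun n => y (max n N')) :=
    ⟨0, Set.forall_mem_range.2 fun n => (hN _ (by omega)).le⟩
  set c := ⨅ n, y (max n N')
  have hyc : Tendsto y atTop (𝓝 c) := (tendsto_atTop_ciInf hanti hbdd).congr'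
    (eventually_atTop.2 ⟨N', fun n hn => by simp only [max_eq_left hn]⟩)
  have hgc : g c = 0 := by
    have hdiff : Tendsto (fun n => y (n + 1) - y n) atTop (𝓝 (c - c)) :=
      (hyc.comp (tendsto_atTop_add_const_right _ 1 tendsto_id)).sub hyc
    have hdelay : Tendsto (fun n => g (y (n - k))) atTop (𝓝 (g c)) :=
      (hcont.tendsto c).comp (hyc.comp (tendsto_atTop_add_const_right _ (-(k : ℤ)) tendsto_id))
    refine tendsto_nhds_unique (hdelay.congr' ?_) (sub_self c ▸ hdiff)
    filter_upwards [eventually_ge_atTop 0] with n hn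
    rw [hy n hn]
    ring
  have hc : 0 ≤ c := ge_of_tendsto hyc (hpos.mono fun _ h => h.le)
  rcases hc.eq_or_lt with h | h
  · exact h ▸ hyc
  · exact absurd hgc (hneg c h).ne

structure NegativeFeedback (g : ℝ → ℝ) (L M : ℝ) : Prop where
  continuous : Continuous g
  abs_le_mul_abs : ∀ u, |g u| ≤ L * |u|
  abs_le_const : ∀ u, |g u| ≤ M
  neg_of_pos : ∀ u, 0 < u → g u < 0
  pos_of_neg : ∀ u, u < 0 → 0 < g u

namespace NegativeFeedback

variable {L M : ℝ}

theorem reflect (hg : NegativeFeedback g L M) : NegativeFeedback (fun u => -g (-u)) L M where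
  continuous := (hg.continuous.comp continuous_neg).neg
  abs_le_mul_abs u := by simpa only [abs_neg] using hg.abs_le_mul_abs (-u)
  abs_le_const u := by simpa only [abs_neg] using hg.abs_le_const (-u)
  neg_of_pos u hu := neg_neg_of_pos (hg.pos_of_neg _ (neg_neg_of_pos hu))
  pos_of_neg u hu := neg_pos_of_neg (hg.neg_of_pos _ (neg_pos_of_neg hu))

theorem eventually_abs_le_semicycleFactor_mul (hg : NegativeFeedback g L M)
    (hy : IsDelaySolution g k y) (hosc₁ : ∃ᶠ n in atTop, y n ≤ 0)
    (hosc₂ : ∃ᶠ n in atTop, 0 ≤ y n) {d : ℝ} (hd : ∀ᶠ n in atTop, |y n| ≤ d) :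
    ∀ᶠ n in atTop, |y n| ≤ semicycleFactor L k * d := by
  have hup := eventually_le_semicycleFactor_mul hy hg.neg_of_pos hg.abs_le_mul_abs hosc₁
    (hd.mono fun _ h => (abs_le.1 h).1)
  have hlow := eventually_le_semicycleFactor_mul hy.neg hg.reflect.neg_of_pos
    hg.reflect.abs_le_mul_abs (hosc₂.mono fun _ => neg_nonpos.2)
    (hd.mono fun _ h => neg_le_neg (abs_le.1 h).2)
  filter_upwards [hup, hlow] with n h₁ h₂
  exact abs_le.2 ⟨neg_le.1 h₂, h₁⟩

theorem tendsto_zero_of_frequently (hg : NegativeFeedback g L M)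
    (hK : semicycleFactor L k < 1) (hy : IsDelaySolution g k y)
    (hosc₁ : ∃ᶠ n in atTop, y n ≤ 0) (hosc₂ : ∃ᶠ n in atTop, 0 ≤ y n) :
    Tendsto y atTop (𝓝 0) := by
  have hK0 : 0 ≤ semicycleFactor L k :=
    semicycleFactor_nonneg (by simpa using (abs_nonneg _).trans (hg.abs_le_mul_abs 1)) k
  set R := (k + 1) * M
  have hbound : ∀ᶠ n in atTop, |y n| ≤ R := by
    filter_upwards [eventually_le_mul_of_abs_le hy hg.neg_of_pos hg.abs_le_const hosc₁,
      eventually_le_mul_of_abs_le hy.neg hg.reflect.neg_of_pos hg.reflect.abs_le_const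
        (hosc₂.mono fun _ => neg_nonpos.2)] with n h₁ h₂
    exact abs_le.2 ⟨neg_le.1 h₂, h₁⟩
  have hcontract : ∀ j : ℕ, ∀ᶠ n in atTop, |y n| ≤ semicycleFactor L k ^ j * R := by
    intro j
    induction j with
    | zero => simpa using hbound
    | succ j ih =>
      simpa only [pow_succ, mul_comm _ (semicycleFactor L k), mul_assoc] using
        hg.eventually_abs_le_semicycleFactor_mul hy hosc₁ hosc₂ ih
  have hpow : Tendsto (fun j : ℕ => semicycleFactor L k ^ j * R) atTop (𝓝 0) := by
    simpa using (tendsto_pow_atTop_nhds_zero_of_lt_one hK0 hK).mul_const R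
  refine Metric.tendsto_nhds.2 fun ε hε => ?_
  obtain ⟨j, hj⟩ := (hpow.eventually (gt_mem_nhds hε)).exists
  filter_upwards [hcontract j] with n hn
  rw [Real.dist_0_eq_abs]
  exact hn.trans_lt hj

theorem tendsto_zero (hg : NegativeFeedback g L M) (hK : semicycleFactor L k < 1)
    (hy : IsDelaySolution g k y) : Tendsto y atTop (𝓝 0) := by
  by_cases hpos : ∀ᶠ n in atTop, 0 < y n
  · exact tendsto_zero_of_eventually_pos hy hg.continuous hg.neg_of_pos hpos
  by_cases hneg : ∀ᶠ n in atTop, y n < 0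
  · simpa using (tendsto_zero_of_eventually_pos hy.neg hg.reflect.continuous
      hg.reflect.neg_of_pos (hneg.mono fun _ => neg_pos.2)).neg
  simp only [not_eventually, not_lt] at hpos hneg
  exact hg.tendsto_zero_of_frequently hK hy hpos hneg

end NegativeFeedback

end DelayDifference

namespace BobwhiteQuail

open DelayDifference Real

noncomputable def logMap (α β T r u : ℝ) : ℝ := log (α + β / (1 + T * exp (r * u)))

variable {α β T r : ℝ}

theorem hasDerivAt_logMap (hα : 0 < α) (hβ : 0 < β) (hT : 0 ≤ T) (u : ℝ) :
    HasDerivAt (logMap α β T r)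
      (-(β * r * (T * exp (r * u))) /
        ((1 + T * exp (r * u)) * (α * (1 + T * exp (r * u)) + β))) u := by
  have hs : 0 < 1 + T * exp (r * u) := by positivity
  have hinner : HasDerivAt (fun x => 1 + T * exp (r * x)) (T * (exp (r * u) * r)) u := by
    simpa using (((hasDerivAt_id u).const_mul r).exp.const_mul T).const_add 1
  have hF := ((hinner.inv hs.ne').const_mul β).const_add α
  simp only [Pi.inv_apply] at hF
  convert hF.log (by positivity) using 1
  · funext x
    simp only [logMap, div_eq_mul_inv]
  · field_simp

theorem mul_le_one_add_mul (hα : 0 ≤ α) (hβ : 0 ≤ β) (s : ℝ) :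
    s * (2 * α + β + 2 * √(α ^ 2 + α * β)) ≤ (1 + s) * (α * (1 + s) + β) := by
  have hsqrt : √(α ^ 2 + α * β) = √α * √(α + β) := by
    rw [← sqrt_mul hα]; ring_nf
  have hsq : (1 + s) * (α * (1 + s) + β) - s * (2 * α + β + 2 * √(α ^ 2 + α * β)) =
      (√α * s - √(α + β)) ^ 2 := by
    rw [hsqrt]
    linear_combination -s ^ 2 * sq_sqrt hα - sq_sqrt (add_nonneg hα hβ)
  nlinarith [sq_nonneg (√α * s - √(α + β))]

theorem logMap_zero (h : α + β / (1 + T) = 1) : logMap α β T r 0 = 0 := by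
  simp [logMap, h]

theorem strictAnti_logMap (hα : 0 < α) (hβ : 0 < β) (hT : 0 < T) (hr : 0 < r) :
    StrictAnti (logMap α β T r) := by
  refine strictAnti_of_hasDerivAt_neg (hasDerivAt_logMap hα hβ hT.le) fun u => ?_
  have : 0 < β * r * (T * exp (r * u)) := by positivity
  exact div_neg_of_neg_of_pos (neg_neg_of_pos this) (by positivity)

theorem abs_logMap_le (hα : 0 < α) (hβ : 0 < β) (hT : 0 ≤ T) (u : ℝ) :
    |logMap α β T r u| ≤ max (log (α + β)) (-log α) := by
  have hs : 0 ≤ T * exp (r * u) := by positivity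
  have h₁ : β / (1 + T * exp (r * u)) ≤ β := div_le_self hβ.le (by linarith)
  have h₂ : 0 < β / (1 + T * exp (r * u)) := by positivity
  rw [abs_le]
  constructor
  · have := log_le_log hα (show α ≤ α + β / (1 + T * exp (r * u)) by linarith)
    exact (neg_le.1 (le_max_right _ _)).trans this
  · exact (log_le_log (by positivity) (by linarith)).trans (le_max_left _ _)

theorem negativeFeedback_logMap (hα : 0 < α) (hβ : 0 < β) (hT : 0 < T) (hr : 0 < r)
    (h : α + β / (1 + T) = 1) :
    NegativeFeedback (logMap α β T r) (β * r / (2 * α + β + 2 * √(α ^ 2 + α * β)))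
      (max (log (α + β)) (-log α)) where
  continuous := continuous_iff_continuousAt.2 fun u =>
    (hasDerivAt_logMap hα hβ hT.le u).continuousAt
  abs_le_mul_abs u := by
    have hD : 0 < 2 * α + β + 2 * √(α ^ 2 + α * β) := by positivity
    have := convex_univ.norm_image_sub_le_of_norm_hasDerivWithin_le
      (C := β * r / (2 * α + β + 2 * √(α ^ 2 + α * β)))
      (fun x _ => (hasDerivAt_logMap (r := r) hα hβ hT.le x).hasDerivWithinAt)
      (fun x _ => ?_) (Set.mem_univ 0) (Set.mem_univ u)
    · simpa [logMap_zero h] using this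
    set s := T * exp (r * x)
    have hs : 0 ≤ s := by positivity
    rw [norm_div, norm_neg, Real.norm_of_nonneg (by positivity),
      Real.norm_of_nonneg (by positivity), div_le_div_iff₀ (by positivity) hD]
    exact (mul_le_mul_of_nonneg_left (mul_le_one_add_mul hα.le hβ.le s)
      (by positivity : 0 ≤ β * r)).trans_eq' (by ring)
  abs_le_const := abs_logMap_le hα hβ hT.le
  neg_of_pos u hu := logMap_zero (r := r) h ▸ strictAnti_logMap hα hβ hT hr hu
  pos_of_neg u hu := logMap_zero (r := r) h ▸ strictAnti_logMap hα hβ hT hr hu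

theorem isDelaySolution_log_div (hα : 0 < α) (hβ : 0 < β) (hT : 0 < T) (hr : r ≠ 0) {m : ℕ}
    {A : ℤ → ℝ} (hApos : ∀ n : ℤ, -(m : ℤ) ≤ n → 0 < A n)
    (hArec : ∀ n : ℤ, 0 ≤ n → A (n + 1) = A n * (α + β / (1 + (A (n - m)) ^ r))) :
    IsDelaySolution (logMap α β T r) m fun n => log (A n / T ^ (1 / r)) := by
  intro n hn
  have hx : 0 < T ^ (1 / r) := rpow_pos_of_pos hT _
  have hAm : 0 < A (n - m) := hApos _ (by omega)
  have hpow : A (n - m) ^ r = T * exp (r * log (A (n - m) / T ^ (1 / r))) := by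
    rw [mul_comm r, ← rpow_def_of_pos (div_pos hAm hx), div_rpow hAm.le hx.le, ← rpow_mul hT.le,
      one_div_mul_cancel hr, rpow_one, mul_div_cancel₀ _ hT.ne']
  beta_reduce
  rw [hArec n hn, hpow, mul_div_right_comm, log_mul (div_pos (hApos n (by omega)) hx).ne'
    (by positivity)]
  rfl

end BobwhiteQuail

theorem tendsto_of_tendsto_log_div {ι : Type*} {l : Filter ι} {A : ι → ℝ} {c : ℝ} (hc : 0 < c)
    (hA : ∀ᶠ n in l, 0 < A n) (h : Tendsto (fun n => Real.log (A n / c)) l (𝓝 0)) :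
    Tendsto A l (𝓝 c) := by
  have := ((Real.continuous_exp.tendsto 0).comp h).const_mul c
  rw [Real.exp_zero, mul_one] at this
  refine this.congr' (hA.mono fun n hn => ?_)
  simp only [Function.comp_apply, Real.exp_log (div_pos hn hc), mul_div_cancel₀ _ hc.ne']

open DelayDifference BobwhiteQuail

/-- Global attractivity in the bobwhite quail model: if
`m + 3/2 < (3/2)(2α + β + 2√(α² + αβ))/(βr)`, then every positive solution of
`A_{n+1} = A_n (α + β/(1 + A_{n-m}^r))` converges to
`x̄ = ((α+β-1)/(1-α))^{1/r}`. -/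
theorem stmt_9 (α β r : ℝ) (m : ℕ) (hα : 0 < α) (hα1 : α < 1) (hβ : 0 < β)
    (hαβ : 1 < α + β) (hr : 0 < r)
    (hcond : (m : ℝ) + 3 / 2 <
      3 / 2 * (2 * α + β + 2 * Real.sqrt (α ^ 2 + α * β)) / (β * r))
    (A : ℤ → ℝ)
    (hApos : ∀ n : ℤ, -(m : ℤ) ≤ n → 0 < A n)
    (hArec : ∀ n : ℤ, 0 ≤ n →
      A (n + 1) = A n * (α + β / (1 + (A (n - m)) ^ r))) :
    Filter.Tendsto A Filter.atTop
      (nhds (((α + β - 1) / (1 - α)) ^ (1 / r))) := by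
  have hT : 0 < (α + β - 1) / (1 - α) := div_pos (by linarith) (by linarith)
  have hfix : α + β / (1 + (α + β - 1) / (1 - α)) = 1 := by
    rw [one_add_div (by linarith), div_div_eq_mul_div, show 1 - α + (α + β - 1) = β by ring,
      mul_div_cancel_left₀ _ hβ.ne']
    ring
  have hD : 0 < 2 * α + β + 2 * Real.sqrt (α ^ 2 + α * β) := by positivity
  have hK : semicycleFactor (β * r / (2 * α + β + 2 * Real.sqrt (α ^ 2 + α * β))) m < 1 := by
    refine semicycleFactor_lt_one (by positivity) ?_
    rw [lt_div_iff₀ (by positivity)] at hcond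
    rw [div_mul_eq_mul_div, div_lt_iff₀ hD]
    linarith
  have hy := (negativeFeedback_logMap hα hβ hT hr hfix).tendsto_zero hK
    (isDelaySolution_log_div hα hβ hT hr.ne' hApos hArec)
  exact tendsto_of_tendsto_log_div (Real.rpow_pos_of_pos hT _) (eventually_atTop.2 ⟨_, hApos⟩) hy
end

section
/- Assume: 0 < F(x) ≤ c for all x > 0, limsup_{x→∞} F(x) < 1, liminf_{x→0⁺} F(x) > 1; there is a unique x̄ > 0 with F(x̄) = 1; 0 < α := inf_{x>0} F(x) < 1 < c := sup_{x>0} F(x) < ∞; and F(x) ≤ 1 if and only if x ≥ x̄. Let (P_n)_{n∈ℤ} be a two-sided positive sequence satisfying P_{n+1} = P_n·F(P_{n−m}) for all n ∈ ℤ, with P_n ≤ P_0 for all n ∈ ℤ. Then x̄ ≤ P_0 < x̄·c^{m+1}. -/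
/-!
At the maximum, `P 1 ≤ P 0` forces `F (P (-m)) ≤ 1`, i.e. `x̄ ≤ P (-m) ≤ P 0`. Likewise
`P (-1) ≤ P 0` forces `F y ≥ 1` for `y = P (-1 - m)`, so `y ≤ x̄`. Since the sequence grows by
at most a factor `c` per step, `P 0 = P (-1) F y ≤ c^m · y F y`, and `y F y < x̄ c` because
either `y < x̄`, or `y = x̄` and `F y = 1 < c`.
-/

theorem le_mul_pow_of_succ_le_mul {P : ℤ → ℝ} {c : ℝ} (hc : 0 ≤ c)
    (hstep : ∀ n, P (n + 1) ≤ P n * c) (n : ℤ) :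
    ∀ k : ℕ, P (n + k) ≤ P n * c ^ k
  | 0 => by simp
  | k + 1 => calc
      P (n + (k + 1 : ℕ)) = P (n + k + 1) := by push_cast; ring_nf
      _ ≤ P (n + k) * c := hstep _
      _ ≤ P n * c ^ k * c := by gcongr; exact le_mul_pow_of_succ_le_mul hc hstep n k
      _ = P n * c ^ (k + 1) := by ring

section DelayEquation

variable {m : ℕ} {F : ℝ → ℝ} {P : ℤ → ℝ}

theorem succ_le_mul_of_forall_le {c : ℝ} (hFc : ∀ x, 0 < x → F x ≤ c) (hPpos : ∀ n, 0 < P n)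
    (hPrec : ∀ n : ℤ, P (n + 1) = P n * F (P (n - m))) (n : ℤ) :
    P (n + 1) ≤ P n * c := by
  rw [hPrec n]
  exact mul_le_mul_of_nonneg_left (hFc _ (hPpos _)) (hPpos n).le

theorem F_le_one_of_succ_le (hPpos : ∀ n, 0 < P n)
    (hPrec : ∀ n : ℤ, P (n + 1) = P n * F (P (n - m))) {n : ℤ} (h : P (n + 1) ≤ P n) :
    F (P (n - m)) ≤ 1 := by
  rw [hPrec n] at h
  exact (mul_le_iff_le_one_right (hPpos n)).1 h

theorem one_le_F_of_le_succ (hPpos : ∀ n, 0 < P n)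
    (hPrec : ∀ n : ℤ, P (n + 1) = P n * F (P (n - m))) {n : ℤ} (h : P n ≤ P (n + 1)) :
    1 ≤ F (P (n - m)) := by
  rw [hPrec n] at h
  exact (le_mul_iff_one_le_right (hPpos n)).1 h

end DelayEquation

theorem mul_F_lt_of_one_le_F {F : ℝ → ℝ} {c xbar y : ℝ} (hFc : ∀ x, 0 < x → F x ≤ c)
    (hc : 1 < c) (hxbar_pos : 0 < xbar) (hFxbar : F xbar = 1)
    (huniq : ∀ y : ℝ, 0 < y → F y = 1 → y = xbar)
    (hmono : ∀ x : ℝ, 0 < x → (F x ≤ 1 ↔ xbar ≤ x)) (hy : 0 < y) (hFy : 1 ≤ F y) :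
    y * F y < xbar * c := by
  rcases lt_or_ge y xbar with hlt | hge
  · calc y * F y < xbar * F y := by gcongr
      _ ≤ xbar * c := by gcongr; exact hFc y hy
  · have hy_eq : y = xbar := huniq y hy (le_antisymm ((hmono y hy).2 hge) hFy)
    rw [hy_eq, hFxbar, mul_one]
    exact lt_mul_of_one_lt_right hxbar_pos hc

theorem stmt_15_general (m : ℕ) (F : ℝ → ℝ) (c α xbar : ℝ)
    (hFc : ∀ x : ℝ, 0 < x → 0 < F x ∧ F x ≤ c)
    (hxbar : 0 < xbar ∧ F xbar = 1 ∧ ∀ y : ℝ, 0 < y → F y = 1 → y = xbar)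
    (hbounds : 0 < α ∧ α < 1 ∧ 1 < c)
    (hmono : ∀ x : ℝ, 0 < x → (F x ≤ 1 ↔ xbar ≤ x))
    (P : ℤ → ℝ)
    (hPpos : ∀ n : ℤ, 0 < P n)
    (hPrec : ∀ n : ℤ, P (n + 1) = P n * F (P (n - m)))
    (hPmax : ∀ n : ℤ, P n ≤ P 0) :
    xbar ≤ P 0 ∧ P 0 < xbar * c ^ (m + 1) := by
  obtain ⟨hxbar_pos, hFxbar, huniq⟩ := hxbar
  have hF_le : ∀ x, 0 < x → F x ≤ c := fun x hx => (hFc x hx).2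
  have hc : 1 < c := hbounds.2.2
  constructor
  · have hF : F (P (0 - m)) ≤ 1 := F_le_one_of_succ_le hPpos hPrec (by simpa using hPmax 1)
    exact ((hmono _ (hPpos _)).1 hF).trans (hPmax _)
  · set y := P (-1 - m)
    have hFy : 1 ≤ F y := one_le_F_of_le_succ hPpos hPrec (by simpa using hPmax (-1))
    have hgrowth : P (-1) ≤ y * c ^ m := by
      simpa using le_mul_pow_of_succ_le_mul (by linarith)
        (succ_le_mul_of_forall_le hF_le hPpos hPrec) (-1 - m) m
    calc P 0 = P (-1) * F y := by simpa using hPrec (-1)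
      _ ≤ y * c ^ m * F y := by gcongr
      _ = c ^ m * (y * F y) := by ring
      _ < c ^ m * (xbar * c) := mul_lt_mul_of_pos_left
        (mul_F_lt_of_one_le_F hF_le hc hxbar_pos hFxbar huniq hmono (hPpos _) hFy) (by positivity)
      _ = xbar * c ^ (m + 1) := by ring

/-- Bounds on the maximum of a full limiting sequence: if `(P_n)_{n∈ℤ}` is a
two-sided positive solution of `P_{n+1} = P_n F(P_{n-m})` attaining its maximum
at `n = 0`, then `x̄ ≤ P 0 < x̄ c^{m+1}`. -/
theorem stmt_15 (m : ℕ) (F : ℝ → ℝ) (c α xbar : ℝ)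
    (hFc : ∀ x : ℝ, 0 < x → 0 < F x ∧ F x ≤ c)
    (hcont : ContinuousOn F (Set.Ioi (0 : ℝ)))
    (hsup : Filter.limsup F Filter.atTop < 1)
    (hinf : 1 < Filter.liminf F (nhdsWithin 0 (Set.Ioi (0 : ℝ))))
    (hxbar : 0 < xbar ∧ F xbar = 1 ∧ ∀ y : ℝ, 0 < y → F y = 1 → y = xbar)
    (hα : α = sInf (F '' Set.Ioi 0))
    (hc : c = sSup (F '' Set.Ioi 0))
    (hbounds : 0 < α ∧ α < 1 ∧ 1 < c)
    (hmono : ∀ x : ℝ, 0 < x → (F x ≤ 1 ↔ xbar ≤ x))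
    (P : ℤ → ℝ)
    (hPpos : ∀ n : ℤ, 0 < P n)
    (hPrec : ∀ n : ℤ, P (n + 1) = P n * F (P (n - m)))
    (hPmax : ∀ n : ℤ, P n ≤ P 0) :
    xbar ≤ P 0 ∧ P 0 < xbar * c ^ (m + 1) :=
  stmt_15_general m F c α xbar hFc hxbar hbounds hmono P hPpos hPrec hPmax
end

section
/- Assume: 0 < F(x) ≤ c for all x > 0, limsup_{x→∞} F(x) < 1, liminf_{x→0⁺} F(x) > 1; there is a unique x̄ > 0 with F(x̄) = 1; 0 < α := inf_{x>0} F(x) < 1 < c := sup_{x>0} F(x) < ∞; and F(x) ≥ 1 if and only if x ≤ x̄. Let (Q_n)_{n∈ℤ} be a two-sided positive sequence satisfying Q_{n+1} = Q_n·F(Q_{n−m}) for all n ∈ ℤ, with Q_n ≥ Q_0 for all n ∈ ℤ. Then x̄·α^{m+1} < Q_0 ≤ x̄. -/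
/-!
At the minimum `n = 0`, the step `Q 0 ≤ Q 1 = Q 0 F(Q (-m))` gives `F(Q (-m)) ≥ 1`, hence
`Q 0 ≤ Q (-m) ≤ x̄`. The step `Q 0 = Q (-1) F(y) ≤ Q (-1)` with `y = Q (-1-m)` gives `F(y) ≤ 1`,
hence `y ≥ x̄`. Since every factor `F` is at least `α`, the `m` steps from `y` to `Q (-1)`
lose at most a factor `α ^ m`, and the last step turns `y` into `y F(y) > x̄ α`.
-/

theorem pow_mul_le_of_forall_mul_le_succ {R : Type*} [Semiring R] [PartialOrder R]
    [IsOrderedRing R] {Q : ℤ → R} {α : R} (hα : 0 ≤ α) (hQ : ∀ n, α * Q n ≤ Q (n + 1))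
    (a : ℤ) (k : ℕ) : α ^ k * Q a ≤ Q (a + k) := by
  induction k with
  | zero => simp
  | succ k ih =>
    calc α ^ (k + 1) * Q a = α * (α ^ k * Q a) := by rw [pow_succ', mul_assoc]
      _ ≤ α * Q (a + k) := mul_le_mul_of_nonneg_left ih hα
      _ ≤ Q (a + (k + 1 : ℕ)) := by push_cast; rw [← add_assoc]; exact hQ _

theorem le_of_apply_le_one {F : ℝ → ℝ} {xbar y : ℝ}
    (hmono : ∀ x : ℝ, 0 < x → (1 ≤ F x ↔ x ≤ xbar))
    (huniq : ∀ y : ℝ, 0 < y → F y = 1 → y = xbar) (hy : 0 < y) (hFy : F y ≤ 1) :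
    xbar ≤ y := by
  by_contra! h
  exact h.ne (huniq y hy (hFy.antisymm ((hmono y hy).2 h.le)))

theorem mul_lt_mul_apply_of_le {F : ℝ → ℝ} {α xbar y : ℝ} (hxbar : 0 < xbar)
    (hFxbar : F xbar = 1) (hα₀ : 0 < α) (hα₁ : α < 1) (hαF : α ≤ F y) (hy : xbar ≤ y) :
    xbar * α < y * F y := by
  rcases hy.eq_or_lt with rfl | hlt
  · rw [hFxbar, mul_one]
    exact mul_lt_of_lt_one_right hxbar hα₁
  · calc xbar * α < y * α := mul_lt_mul_of_pos_right hlt hα₀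
      _ ≤ y * F y := mul_le_mul_of_nonneg_left hαF (hxbar.trans hlt).le

theorem stmt_16_general (m : ℕ) (F : ℝ → ℝ) (c α xbar : ℝ)
    (hFc : ∀ x : ℝ, 0 < x → 0 < F x ∧ F x ≤ c)
    (hxbar : 0 < xbar ∧ F xbar = 1 ∧ ∀ y : ℝ, 0 < y → F y = 1 → y = xbar)
    (hα : α = sInf (F '' Set.Ioi 0))
    (hbounds : 0 < α ∧ α < 1 ∧ 1 < c)
    (hmono : ∀ x : ℝ, 0 < x → (1 ≤ F x ↔ x ≤ xbar))
    (Q : ℤ → ℝ)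
    (hQpos : ∀ n : ℤ, 0 < Q n)
    (hQrec : ∀ n : ℤ, Q (n + 1) = Q n * F (Q (n - m)))
    (hQmin : ∀ n : ℤ, Q 0 ≤ Q n) :
    xbar * α ^ (m + 1) < Q 0 ∧ Q 0 ≤ xbar := by
  obtain ⟨hxbar₀, hFxbar, huniq⟩ := hxbar
  obtain ⟨hα₀, hα₁, -⟩ := hbounds
  have hαF : ∀ x, 0 < x → α ≤ F x := fun x hx =>
    hα ▸ csInf_le ⟨0, by rintro _ ⟨z, hz, rfl⟩; exact (hFc z hz).1.le⟩ ⟨x, hx, rfl⟩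
  have hQ₁ : Q 1 = Q 0 * F (Q (-m)) := by simpa using hQrec 0
  have hQ₀ : Q 0 = Q (-1) * F (Q (-1 - m)) := by simpa using hQrec (-1)
  have hFy : F (Q (-1 - m)) ≤ 1 :=
    (mul_le_iff_le_one_right (hQpos (-1))).1 (hQ₀ ▸ hQmin (-1))
  have hy : xbar ≤ Q (-1 - m) := le_of_apply_le_one hmono huniq (hQpos _) hFy
  have hgrowth : α ^ m * Q (-1 - m) ≤ Q (-1) := by
    simpa using pow_mul_le_of_forall_mul_le_succ hα₀.le (fun n => by
      rw [hQrec n, mul_comm]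
      exact mul_le_mul_of_nonneg_left (hαF _ (hQpos _)) (hQpos n).le) (-1 - m) m
  refine ⟨?_, ?_⟩
  · calc xbar * α ^ (m + 1) = α ^ m * (xbar * α) := by ring
      _ < α ^ m * (Q (-1 - m) * F (Q (-1 - m))) := mul_lt_mul_of_pos_left
          (mul_lt_mul_apply_of_le hxbar₀ hFxbar hα₀ hα₁ (hαF _ (hQpos _)) hy) (pow_pos hα₀ m)
      _ ≤ Q (-1) * F (Q (-1 - m)) := by
          rw [← mul_assoc]
          exact mul_le_mul_of_nonneg_right hgrowth (hFc _ (hQpos _)).1.le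
      _ = Q 0 := hQ₀.symm
  · have hF : 1 ≤ F (Q (-m)) := (le_mul_iff_one_le_right (hQpos 0)).1 (hQ₁ ▸ hQmin 1)
    exact (hQmin _).trans ((hmono _ (hQpos _)).1 hF)

/-- Bounds on the minimum of a full limiting sequence: if `(Q_n)_{n∈ℤ}` is a
two-sided positive solution of `Q_{n+1} = Q_n F(Q_{n-m})` attaining its minimum
at `n = 0`, then `x̄ α^{m+1} < Q 0 ≤ x̄`. -/
theorem stmt_16 (m : ℕ) (F : ℝ → ℝ) (c α xbar : ℝ)
    (hFc : ∀ x : ℝ, 0 < x → 0 < F x ∧ F x ≤ c)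
    (hcont : ContinuousOn F (Set.Ioi (0 : ℝ)))
    (hsup : Filter.limsup F Filter.atTop < 1)
    (hinf : 1 < Filter.liminf F (nhdsWithin 0 (Set.Ioi (0 : ℝ))))
    (hxbar : 0 < xbar ∧ F xbar = 1 ∧ ∀ y : ℝ, 0 < y → F y = 1 → y = xbar)
    (hα : α = sInf (F '' Set.Ioi 0))
    (hc : c = sSup (F '' Set.Ioi 0))
    (hbounds : 0 < α ∧ α < 1 ∧ 1 < c)
    (hmono : ∀ x : ℝ, 0 < x → (1 ≤ F x ↔ x ≤ xbar))
    (Q : ℤ → ℝ)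
    (hQpos : ∀ n : ℤ, 0 < Q n)
    (hQrec : ∀ n : ℤ, Q (n + 1) = Q n * F (Q (n - m)))
    (hQmin : ∀ n : ℤ, Q 0 ≤ Q n) :
    xbar * α ^ (m + 1) < Q 0 ∧ Q 0 ≤ xbar :=
  stmt_16_general m F c α xbar hFc hxbar hα hbounds hmono Q hQpos hQrec hQmin
end
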